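/- arXiv:2004.09735 — 10 statements merged into one kernel-verified Lean document; each statement's English description precedes it below -/
import Mathlib

section
/- Let X_n ⊆ {0,1}^D be a set of n ≥ 2 pairwise distinct binary vectors and let d = 2⌈log₂ n⌉; assume d ≤ D. Then there exist a threshold layer G from {0,1}^D to {0,1}^{D²} and a threshold layer H from {0,1}^{D²} to {0,1}^d such that the composition H ∘ G is injective on X_n. -/
/-- A Boolean threshold function: there are integer weights `a` and an integer
threshold `θ` such that `f x = 1` iff `∑ i, a i * x i ≥ θ` (bits as integers 0/1). -/
def IsThresholdFun {ι : Type*} [Fintype ι] (f : (ι → Bool) → Bool) : Prop :=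
  ∃ (a : ι → ℤ) (θ : ℤ), ∀ x, f x = decide (θ ≤ ∑ i, a i * (if x i then 1 else 0))

/-- A threshold layer: each coordinate function is a Boolean threshold function. -/
def IsThresholdLayer {ι κ : Type*} [Fintype ι] (F : (ι → Bool) → (κ → Bool)) : Prop :=
  ∀ j, IsThresholdFun (fun x => F x j)

/-- The step vector `h^i[s]`: coordinate `j` is 1 iff `j ≤ i`. -/
def stepVec (s i : ℕ) : Fin s → Bool := fun j => decide (j.val ≤ i)

/-- `i2b d j`: the `d`-bit binary representation of `j`. -/
def i2b (d j : ℕ) : Fin d → Bool := fun k => j.testBit k.val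

/-- Integer dot product of a weight vector with a bit vector. -/
def dotInt {ι : Type*} [Fintype ι] (a : ι → ℤ) (x : ι → Bool) : ℤ :=
  ∑ i, a i * (if x i then 1 else 0)


lemma aux_flip {D : ℕ} (z : Fin D → ZMod 2) (i0 : Fin D) (hz1 : z i0 = 1)
    (δ : Fin D → ZMod 2) (hδ : δ = fun i => if i = i0 then 1 else 0) :
    (∀ b : Fin D → ZMod 2, (b + δ) + δ = b) ∧
    (∀ b : Fin D → ZMod 2, ∑ i, (b + δ) i * z i = (∑ i, b i * z i) + 1) := by
  constructor
  · intro b; funext i; simp only [Pi.add_apply, hδ]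
    split
    · rw [add_assoc, show (1:ZMod 2) + 1 = 0 from by decide, add_zero]
    · rw [add_zero, add_zero]
  · intro b
    have h1 : ∀ i ∈ Finset.univ, (b + δ) i * z i = b i * z i + δ i * z i := by
      intro i _; simp only [Pi.add_apply]; ring
    rw [Finset.sum_congr rfl h1, Finset.sum_add_distrib]
    congr 1
    have h2 : ∀ i ∈ Finset.univ, δ i * z i = if i = i0 then z i else 0 := by
      intro i _; simp only [hδ]; split <;> simp
    rw [Finset.sum_congr rfl h2, Finset.sum_ite_eq' Finset.univ i0 z]
    simp [hz1]

lemma aux_card_ker {D : ℕ} (z : Fin D → ZMod 2) (hz : z ≠ 0) :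
    (Finset.univ.filter (fun b : Fin D → ZMod 2 => ∑ i, b i * z i = 0)).card = 2^(D-1) := by
  obtain ⟨i0, hi0⟩ : ∃ i0, z i0 ≠ 0 := by
    by_contra h; push_neg at h; exact hz (funext h)
  have hD : 0 < D := i0.pos
  have hz1 : z i0 = 1 := by
    revert hi0; generalize z i0 = b; revert b; decide
  obtain ⟨hδδ, hdot⟩ := aux_flip z i0 hz1 (fun i => if i = i0 then 1 else 0) rfl
  have hdisj : Disjoint (Finset.univ.filter (fun b : Fin D → ZMod 2 => ∑ i, b i * z i = 0))
      (Finset.univ.filter (fun b : Fin D → ZMod 2 => ∑ i, b i * z i = 1)) := by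
    rw [Finset.disjoint_left]
    intro b hb0 hb1
    rw [Finset.mem_filter] at hb0 hb1
    rw [hb0.2] at hb1
    exact absurd hb1.2 (by decide)
  have hunion : (Finset.univ.filter (fun b : Fin D → ZMod 2 => ∑ i, b i * z i = 0))
      ∪ (Finset.univ.filter (fun b : Fin D → ZMod 2 => ∑ i, b i * z i = 1))
      = Finset.univ := by
    apply Finset.ext
    intro b
    simp only [Finset.mem_union, Finset.mem_filter, Finset.mem_univ, true_and, iff_true]
    generalize (∑ i, b i * z i) = s
    revert s; decide
  have hsplit : (Finset.univ.filter (fun b : Fin D → ZMod 2 => ∑ i, b i * z i = 0)).card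
      + (Finset.univ.filter (fun b : Fin D → ZMod 2 => ∑ i, b i * z i = 1)).card
      = (Finset.univ : Finset (Fin D → ZMod 2)).card := by
    rw [← Finset.card_union_of_disjoint hdisj, hunion]
  have hbij : (Finset.univ.filter (fun b : Fin D → ZMod 2 => ∑ i, b i * z i = 0)).card
      = (Finset.univ.filter (fun b : Fin D → ZMod 2 => ∑ i, b i * z i = 1)).card := by
    refine Finset.card_bij' (fun b _ => b + (fun i => if i = i0 then 1 else 0))
      (fun b _ => b + (fun i => if i = i0 then 1 else 0)) ?_ ?_ ?_ ?_
    · intro b hb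
      rw [Finset.mem_filter] at hb ⊢
      refine ⟨Finset.mem_univ _, ?_⟩
      rw [hdot, hb.2, zero_add]
    · intro b hb
      rw [Finset.mem_filter] at hb ⊢
      refine ⟨Finset.mem_univ _, ?_⟩
      rw [hdot, hb.2]; decide
    · intro b _; exact hδδ b
    · intro b _; exact hδδ b
  have hcardU : (Finset.univ : Finset (Fin D → ZMod 2)).card = 2^D := by
    rw [Finset.card_univ, Fintype.card_fun, ZMod.card, Fintype.card_fin]
  have h2D : 2^D = 2 * 2^(D-1) := by
    rw [← pow_succ', Nat.sub_add_cancel hD]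
  rw [← hbij, hcardU, h2D, ← two_mul] at hsplit
  exact Nat.eq_of_mul_eq_mul_left (by norm_num) hsplit

lemma aux_card_ker_pow {D : ℕ} (d : ℕ) (z : Fin D → ZMod 2) (hz : z ≠ 0) :
    (Finset.univ.filter
      (fun A : Fin d → Fin D → ZMod 2 => ∀ t, ∑ i, A t i * z i = 0)).card
      = (2^(D-1))^d := by
  rw [← Fintype.card_subtype]
  have e : {A : Fin d → Fin D → ZMod 2 // ∀ t, ∑ i, A t i * z i = 0}
      ≃ ((t : Fin d) → {b : Fin D → ZMod 2 // ∑ i, b i * z i = 0}) :=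
    Equiv.subtypePiEquivPi (p := fun (_ : Fin d) (b : Fin D → ZMod 2) => ∑ i, b i * z i = 0)
  rw [Fintype.card_congr e, Fintype.card_pi]
  have h1 : ∀ t ∈ Finset.univ (α := Fin d),
      Fintype.card {b : Fin D → ZMod 2 // ∑ i, b i * z i = 0} = 2^(D-1) := by
    intro t _
    rw [Fintype.card_subtype, aux_card_ker z hz]
  rw [Finset.prod_congr rfl h1, Finset.prod_const, Finset.card_univ, Fintype.card_fin]
lemma aux_exists_good {D : ℕ} (d : ℕ) (Z : Finset (Fin D → ZMod 2))
    (h0 : ∀ z ∈ Z, z ≠ 0) (hZ : Z.card < 2^d) :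
    ∃ a : Fin d → Fin D → ZMod 2, ∀ z ∈ Z, ∃ t, ∑ i, a t i * z i ≠ 0 := by
  rcases Z.eq_empty_or_nonempty with hE | ⟨z0, hz0⟩
  · exact ⟨fun _ _ => 0, by simp [hE]⟩
  have hD : 0 < D := by
    rcases Nat.eq_zero_or_pos D with h | h
    · subst h
      exact absurd (funext (fun i => i.elim0) : z0 = 0) (h0 z0 hz0)
    · exact h
  by_contra hcon
  push_neg at hcon
  have key : ∀ a : Fin d → Fin D → ZMod 2,
      1 ≤ (Z.filter (fun z => ∀ t, ∑ i, a t i * z i = 0)).card := by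
    intro a; obtain ⟨z, hzZ, hza⟩ := hcon a
    exact Finset.card_pos.2 ⟨z, Finset.mem_filter.2 ⟨hzZ, hza⟩⟩
  have hsum : (2^D)^d ≤ ∑ a : Fin d → Fin D → ZMod 2,
      (Z.filter (fun z => ∀ t, ∑ i, a t i * z i = 0)).card := by
    calc (2^D)^d = ∑ _a : Fin d → Fin D → ZMod 2, 1 := by
          rw [Finset.sum_const, Finset.card_univ, smul_eq_mul, mul_one,
            Fintype.card_fun, Fintype.card_fun, ZMod.card, Fintype.card_fin,
            Fintype.card_fin]
      _ ≤ _ := Finset.sum_le_sum (fun a _ => key a)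
  have hsum2 : ∑ a : Fin d → Fin D → ZMod 2,
      (Z.filter (fun z => ∀ t, ∑ i, a t i * z i = 0)).card
      = Z.card * (2^(D-1))^d := by
    calc ∑ a : Fin d → Fin D → ZMod 2,
        (Z.filter (fun z => ∀ t, ∑ i, a t i * z i = 0)).card
        = ∑ a : Fin d → Fin D → ZMod 2, ∑ z ∈ Z,
            (if (∀ t, ∑ i, a t i * z i = 0) then 1 else 0) :=
          Finset.sum_congr rfl (fun a _ => Finset.card_filter _ _)
      _ = ∑ z ∈ Z, ∑ a : Fin d → Fin D → ZMod 2,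
            (if (∀ t, ∑ i, a t i * z i = 0) then 1 else 0) := Finset.sum_comm
      _ = ∑ z ∈ Z, (2^(D-1))^d := by
          refine Finset.sum_congr rfl (fun z hz => ?_)
          rw [← Finset.card_filter]
          exact aux_card_ker_pow d z (h0 z hz)
      _ = Z.card * (2^(D-1))^d := by rw [Finset.sum_const, smul_eq_mul]
  have hlt : Z.card * (2^(D-1))^d < (2^D)^d := by
    calc Z.card * (2^(D-1))^d < 2^d * (2^(D-1))^d :=
          mul_lt_mul_of_pos_right hZ (by positivity)
      _ = (2 * 2^(D-1))^d := by rw [mul_pow]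
      _ = (2^D)^d := by
          congr 1
          rw [← pow_succ', Nat.sub_add_cancel hD]
  rw [hsum2] at hsum
  exact absurd hsum (not_le.mpr hlt)

def cntW {D : ℕ} (w : Fin D → ZMod 2) (x : Fin D → Bool) : ℕ :=
  ∑ i, if w i = 1 ∧ x i = true then 1 else 0

lemma cntW_le {D : ℕ} (w : Fin D → ZMod 2) (x : Fin D → Bool) : cntW w x ≤ D := by
  calc cntW w x ≤ ∑ _i : Fin D, 1 :=
        Finset.sum_le_sum (fun i _ => by split <;> omega)
    _ = D := by simp

lemma cntW_castZ {D : ℕ} (w : Fin D → ZMod 2) (x : Fin D → Bool) :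
    ((cntW w x : ℕ) : ℤ) = ∑ i, (if w i = 1 then (1:ℤ) else 0) * (if x i then 1 else 0) := by
  unfold cntW
  push_cast
  apply Finset.sum_congr rfl
  intro i _
  by_cases h1 : w i = 1 <;> by_cases h2 : x i = true <;> simp [h1, h2]

lemma aux_parity_sum (D c : ℕ) (h : c ≤ D) :
    ∑ j : Fin D, (-1:ℤ)^(j:ℕ) * (if (j:ℕ) + 1 ≤ c then 1 else 0)
      = if Odd c then 1 else 0 := by
  rw [Fin.sum_univ_eq_sum_range (fun j => (-1:ℤ)^j * (if j + 1 ≤ c then 1 else 0))]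
  rw [← Finset.sum_subset (Finset.range_subset_range.2 h)
    (by intro j hj hnj; rw [Finset.mem_range] at *; rw [if_neg (by omega)]; ring_nf)]
  have h1 : ∀ j ∈ Finset.range c, (-1:ℤ)^j * (if j+1 ≤ c then 1 else 0) = (-1:ℤ)^j := by
    intro j hj; rw [Finset.mem_range] at hj; rw [if_pos (by omega)]; ring
  rw [Finset.sum_congr rfl h1, neg_one_geom_sum]
  rcases Nat.even_or_odd c with hc | hc
  · rw [if_pos hc, if_neg (Nat.not_odd_iff_even.mpr hc)]
  · rw [if_neg (Nat.not_even_iff_odd.mpr hc), if_pos hc]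

def gLayer (D : ℕ) (w : ℕ → Fin D → ZMod 2) : (Fin D → Bool) → Fin (D * D) → Bool :=
  fun x u => decide ((((u : ℕ) % D + 1 : ℕ) : ℤ)
    ≤ ∑ i, (if w ((u : ℕ) / D) i = 1 then (1:ℤ) else 0) * (if x i then 1 else 0))

def hLayer (D d : ℕ) : (Fin (D * D) → Bool) → Fin d → Bool :=
  fun y t => decide ((1:ℤ)
    ≤ ∑ u : Fin (D * D), (if (u : ℕ) / D = (t : ℕ) then (-1:ℤ)^((u : ℕ) % D) else 0)
        * (if y u then 1 else 0))


lemma gLayer_isLayer (D : ℕ) (w : ℕ → Fin D → ZMod 2) : IsThresholdLayer (gLayer D w) :=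
  fun u => ⟨fun i => if w ((u : ℕ) / D) i = 1 then 1 else 0,
    (((u : ℕ) % D + 1 : ℕ) : ℤ), fun _ => rfl⟩

lemma hLayer_isLayer (D d : ℕ) : IsThresholdLayer (hLayer D d) :=
  fun t => ⟨fun u => if (u : ℕ) / D = (t : ℕ) then (-1:ℤ)^((u : ℕ) % D) else 0,
    1, fun _ => rfl⟩

lemma comp_eq (D d : ℕ) (hdD : d ≤ D) (w : ℕ → Fin D → ZMod 2)
    (xx : Fin D → Bool) (t : Fin d) :
    hLayer D d (gLayer D w xx) t = decide (Odd (cntW (w (t : ℕ)) xx)) := by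
  have hD : 0 < D := lt_of_lt_of_le t.pos hdD
  have hg : ∀ u : Fin (D*D), gLayer D w xx u
      = decide ((u : ℕ) % D + 1 ≤ cntW (w ((u : ℕ) / D)) xx) := by
    intro u
    unfold gLayer
    rw [← cntW_castZ]
    apply decide_eq_decide.mpr
    exact_mod_cast Iff.rfl
  unfold hLayer
  have hsum : ∑ u : Fin (D*D),
      (if (u : ℕ) / D = (t : ℕ) then (-1:ℤ)^((u : ℕ) % D) else 0)
        * (if gLayer D w xx u then 1 else 0)
      = if Odd (cntW (w (t : ℕ)) xx) then 1 else 0 := by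
    have hre : ∑ u : Fin (D*D),
        (if (u : ℕ) / D = (t : ℕ) then (-1:ℤ)^((u : ℕ) % D) else 0)
          * (if gLayer D w xx u then 1 else 0)
        = ∑ p : Fin D × Fin D,
        (if ((p.1 : ℕ) = (t : ℕ)) then (-1:ℤ)^((p.2 : ℕ)) else 0)
          * (if ((p.2 : ℕ) + 1 ≤ cntW (w (p.1 : ℕ)) xx) then 1 else 0) := by
      refine Finset.sum_nbij'
        (i := fun (u : Fin (D*D)) => ((⟨(u : ℕ) / D, (Nat.div_lt_iff_lt_mul hD).2 u.isLt⟩ : Fin D),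
                   (⟨(u : ℕ) % D, Nat.mod_lt _ hD⟩ : Fin D)))
        (j := fun (p : Fin D × Fin D) => (⟨D * (p.1 : ℕ) + (p.2 : ℕ), by
          have h1 := p.1.isLt; have h2 := p.2.isLt
          calc D * (p.1 : ℕ) + (p.2 : ℕ) < D * ((p.1 : ℕ) + 1) := by
                rw [Nat.mul_add, Nat.mul_one]; omega
            _ ≤ D * D := Nat.mul_le_mul_left D (by omega)⟩ : Fin (D * D)))
        ?_ ?_ ?_ ?_ ?_
      · intro u _; exact Finset.mem_univ _
      · intro p _; exact Finset.mem_univ _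
      · intro u _
        apply Fin.ext
        exact Nat.div_add_mod (u : ℕ) D
      · intro p _
        apply Prod.ext <;> apply Fin.ext
        · show (D * (p.1 : ℕ) + (p.2 : ℕ)) / D = (p.1 : ℕ)
          rw [Nat.mul_add_div hD, Nat.div_eq_of_lt p.2.isLt, add_zero]
        · show (D * (p.1 : ℕ) + (p.2 : ℕ)) % D = (p.2 : ℕ)
          rw [Nat.mul_add_mod, Nat.mod_eq_of_lt p.2.isLt]
      · intro u _
        rw [hg u]
        simp only [decide_eq_true_eq]
    rw [hre, Fintype.sum_prod_type]
    rw [Finset.sum_eq_single (⟨(t : ℕ), lt_of_lt_of_le t.isLt hdD⟩ : Fin D)]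
    · simp only [if_pos rfl]
      exact aux_parity_sum D _ (cntW_le _ _)
    · intro k _ hk
      have hne : (k : ℕ) ≠ (t : ℕ) := by
        intro h; exact hk (Fin.ext h)
      simp [hne]
    · intro h; exact absurd (Finset.mem_univ _) h
  rw [hsum]
  by_cases h : Odd (cntW (w (t : ℕ)) xx)
  · rw [if_pos h]; simp [h]
  · rw [if_neg h]; simp [h]

lemma cntW_cast2 {D : ℕ} (w : Fin D → ZMod 2) (x : Fin D → Bool) :
    ((cntW w x : ℕ) : ZMod 2) = ∑ i, w i * (if x i then 1 else 0) := by
  unfold cntW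
  push_cast
  apply Finset.sum_congr rfl
  intro i _
  have hw : w i = 0 ∨ w i = 1 := by
    generalize w i = b; revert b; decide
  rcases hw with h1 | h1 <;> by_cases h2 : x i = true <;> simp [h1, h2]

/-- a three-layer BTN (hidden layer of size `D²`, output layer of size
`2⌈log₂ n⌉`) whose composition is injective on `X_n`. -/
theorem stmt_5 (D n : ℕ) (hn : 2 ≤ n) (hd : 2 * Nat.clog 2 n ≤ D)
    (x : Fin n → Fin D → Bool) (hx : Function.Injective x) :
    ∃ (G : (Fin D → Bool) → (Fin (D * D) → Bool))
      (H : (Fin (D * D) → Bool) → (Fin (2 * Nat.clog 2 n) → Bool)),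
      IsThresholdLayer G ∧ IsThresholdLayer H ∧
      Function.Injective (fun i : Fin n => H (G (x i))) := by
  classical
  set d := 2 * Nat.clog 2 n with hdef
  have hn0 : 0 < n := by omega
  have hd2 : 2 ≤ d := by
    have := Nat.clog_pos (b := 2) (by norm_num) hn
    omega
  have hdD : d ≤ D := hd
  set Z : Finset (Fin D → ZMod 2) :=
    (Finset.univ.offDiag).image (fun p : Fin n × Fin n => fun i0 =>
      (if x p.1 i0 then (1 : ZMod 2) else 0) - (if x p.2 i0 then 1 else 0)) with hZdef
  have h0 : ∀ z ∈ Z, z ≠ 0 := by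
    intro z hz
    rw [hZdef, Finset.mem_image] at hz
    obtain ⟨p, hp, rfl⟩ := hz
    rw [Finset.mem_offDiag] at hp
    have hxne : x p.1 ≠ x p.2 := fun h => hp.2.2 (hx h)
    obtain ⟨i0, hi0⟩ := Function.ne_iff.1 hxne
    intro h
    apply hi0
    have h1 := congrFun h i0
    simp only [Pi.zero_apply, sub_eq_zero] at h1
    cases hb1 : x p.1 i0 <;> cases hb2 : x p.2 i0 <;> simp_all
  have hcard : Z.card < 2 ^ d := by
    have h1 : Z.card ≤ n * n - n := by
      calc Z.card ≤ (Finset.univ.offDiag : Finset (Fin n × Fin n)).card :=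
            Finset.card_image_le
        _ = n * n - n := by
            rw [Finset.offDiag_card, Finset.card_univ, Fintype.card_fin]
    have h2 : n ≤ 2 ^ Nat.clog 2 n := Nat.le_pow_clog (by norm_num) n
    have h3 : n * n ≤ 2 ^ d := by
      rw [hdef, two_mul, pow_add]
      exact Nat.mul_le_mul h2 h2
    have h4 : n * n - n < n * n := Nat.sub_lt (Nat.mul_pos hn0 hn0) hn0
    exact lt_of_le_of_lt h1 (lt_of_lt_of_le h4 h3)
  obtain ⟨a, ha⟩ := aux_exists_good d Z h0 hcard
  set w : ℕ → Fin D → ZMod 2 := fun k => if h : k < d then a ⟨k, h⟩ else 0 with hw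
  refine ⟨gLayer D w, hLayer D d, gLayer_isLayer D w, hLayer_isLayer D d, ?_⟩
  intro i i' hii
  by_contra hne
  have hzZ : (fun i0 => (if x i i0 then (1 : ZMod 2) else 0)
      - (if x i' i0 then 1 else 0)) ∈ Z := by
    rw [hZdef, Finset.mem_image]
    exact ⟨(i, i'), Finset.mem_offDiag.2 ⟨Finset.mem_univ _, Finset.mem_univ _, hne⟩, rfl⟩
  obtain ⟨t, ht⟩ := ha _ hzZ
  apply ht
  have h1 := congrFun hii t
  simp only at h1
  rw [comp_eq D d hdD w (x i) t, comp_eq D d hdD w (x i') t] at h1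
  have h2 : Odd (cntW (w (t : ℕ)) (x i)) ↔ Odd (cntW (w (t : ℕ)) (x i')) :=
    decide_eq_decide.mp h1
  have h3 : ((cntW (w (t : ℕ)) (x i) : ℕ) : ZMod 2)
      = ((cntW (w (t : ℕ)) (x i') : ℕ) : ZMod 2) := by
    rw [ZMod.natCast_eq_natCast_iff]
    show cntW (w (t : ℕ)) (x i) % 2 = cntW (w (t : ℕ)) (x i') % 2
    rcases Nat.even_or_odd (cntW (w (t : ℕ)) (x i)) with he | ho
    · have he' : Even (cntW (w (t : ℕ)) (x i')) := by
        rw [← Nat.not_odd_iff_even] at he ⊢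
        exact fun hc => he (h2.mpr hc)
      rw [Nat.even_iff.1 he, Nat.even_iff.1 he']
    · have ho' := h2.mp ho
      rw [Nat.odd_iff.1 ho, Nat.odd_iff.1 ho']
  rw [cntW_cast2, cntW_cast2] at h3
  have hwt : w (t : ℕ) = a t := by
    rw [hw]
    simp only [t.isLt, dif_pos]
  rw [hwt] at h3
  have hexp : ∑ i0, a t i0 * ((if x i i0 then (1 : ZMod 2) else 0)
        - (if x i' i0 then 1 else 0))
      = (∑ i0, a t i0 * (if x i i0 then (1 : ZMod 2) else 0))
        - ∑ i0, a t i0 * (if x i' i0 then (1 : ZMod 2) else 0) := by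
    rw [← Finset.sum_sub_distrib]
    apply Finset.sum_congr rfl
    intro i0 _
    ring
  rw [hexp, h3, sub_self]
end

section
/- Let X_n ⊆ {0,1}^D be a set of n pairwise distinct binary vectors, enumerated x^0, …, x^{n−1} so that a · x^0 < ⋯ < a · x^{n−1} for some a ∈ ℤ^D, and let r = ⌈√n⌉. Then there exist a threshold layer from {0,1}^D to {0,1}^{r+D} and a threshold layer from {0,1}^{r+D} to {0,1}^{2r} whose composition maps x^i to the concatenated vector (h^k[r], h^ℓ[r]) ∈ {0,1}^{2r}, where k and ℓ are the unique integers with i = k·r + ℓ and 0 ≤ ℓ < r. -/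
lemma dot_e {κ : Type*} [Fintype κ] [DecidableEq κ] (m : κ) (y : κ → Bool) :
    dotInt (fun i => if i = m then 1 else 0) y = if y m then 1 else 0 := by
  simp only [dotInt, ite_mul, one_mul, zero_mul]
  rw [Finset.sum_ite_eq' Finset.univ m (fun i => if y i then (1:ℤ) else 0)]
  simp

lemma dot_ev {N : ℕ} (t : ℕ) (ht : t < N) (y : Fin N → Bool) :
    dotInt (fun i : Fin N => if i.val = t then 1 else 0) y
      = if y ⟨t, ht⟩ then 1 else 0 := by
  have h : (fun i : Fin N => if i.val = t then (1:ℤ) else 0)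
      = fun i => if i = ⟨t, ht⟩ then 1 else 0 := by
    funext i; simp [Fin.ext_iff]
  rw [h, dot_e]

lemma decide_one_le (b : Bool) : decide (1 ≤ (if b then (1:ℤ) else 0)) = b := by
  cases b <;> simp

/-- First layer of the construction. -/
def Fnet (r D : ℕ) (C : ℕ → ℤ) (a : Fin D → ℤ) :
    (Fin D → Bool) → Fin (r + D) → Bool :=
  fun v jj =>
    if jj.val < r then decide (C (jj.val * r) ≤ dotInt a v)
    else decide (1 ≤ dotInt (fun m : Fin D => if m.val = jj.val - r then 1 else 0) v)

/-- Weights used in the second half of the second layer. -/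
def Wnet (r D : ℕ) (C : ℕ → ℤ) (a : Fin D → ℤ) (t : ℕ) : Fin (r + D) → ℤ :=
  fun m =>
    if m.val < r then
      (if m.val = 0 then 0 else -(C (m.val * r + t) - C ((m.val - 1) * r + t)))
    else (if h : m.val - r < D then a ⟨m.val - r, h⟩ else 0)

/-- Second layer of the construction. -/
def Gnet (r D : ℕ) (C : ℕ → ℤ) (a : Fin D → ℤ) :
    (Fin (r + D) → Bool) → Fin (2 * r) → Bool :=
  fun y jj =>
    if jj.val < r then
      decide (1 ≤ dotInt (fun m : Fin (r + D) => if m.val = jj.val then 1 else 0) y)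
    else decide (C (jj.val - r) ≤ dotInt (Wnet r D C a (jj.val - r)) y)

lemma Fnet_layer (r D : ℕ) (C : ℕ → ℤ) (a : Fin D → ℤ) :
    IsThresholdLayer (Fnet r D C a) := by
  intro j
  by_cases h : j.val < r
  · exact ⟨a, C (j.val * r), fun v => by simp only [Fnet]; rw [if_pos h]; rfl⟩
  · exact ⟨_, 1, fun v => by simp only [Fnet]; rw [if_neg h]; rfl⟩

lemma Gnet_layer (r D : ℕ) (C : ℕ → ℤ) (a : Fin D → ℤ) :
    IsThresholdLayer (Gnet r D C a) := by
  intro j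
  by_cases h : j.val < r
  · exact ⟨_, 1, fun y => by simp only [Gnet]; rw [if_pos h]; rfl⟩
  · exact ⟨_, C (j.val - r), fun y => by simp only [Gnet]; rw [if_neg h]; rfl⟩

lemma Fnet_lo (r D : ℕ) (C : ℕ → ℤ) (a : Fin D → ℤ) (v : Fin D → Bool)
    (jj : Fin (r + D)) (h : jj.val < r) :
    Fnet r D C a v jj = decide (C (jj.val * r) ≤ dotInt a v) := by
  simp only [Fnet]; rw [if_pos h]

lemma Fnet_hi (r D : ℕ) (C : ℕ → ℤ) (a : Fin D → ℤ) (v : Fin D → Bool)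
    (jj : Fin (r + D)) (h : ¬ jj.val < r) (hD : jj.val - r < D) :
    Fnet r D C a v jj = v ⟨jj.val - r, hD⟩ := by
  simp only [Fnet]; rw [if_neg h, dot_ev (jj.val - r) hD, decide_one_le]

/-- Telescoping evaluation of the second-layer dot product. -/
lemma dotW (r D : ℕ) (C : ℕ → ℤ) (a : Fin D → ℤ) (t k : ℕ) (hk : k < r)
    (y : Fin (r + D) → Bool)
    (hstep : ∀ m : Fin r, y (Fin.castAdd D m) = decide (m.val ≤ k)) :
    dotInt (Wnet r D C a t) y
      = (C t - C (k * r + t)) + dotInt a (fun m => y (Fin.natAdd r m)) := by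
  rw [dotInt, Fin.sum_univ_add]
  have h1 : ∀ m : Fin r,
      Wnet r D C a t (Fin.castAdd D m) *
        (if y (Fin.castAdd D m) then 1 else 0)
      = (if m.val = 0 then (0:ℤ) else -(C (m.val * r + t) - C ((m.val - 1) * r + t))) *
        (if m.val ≤ k then 1 else 0) := by
    intro m
    simp only [Wnet, Fin.coe_castAdd, hstep m]
    rw [if_pos m.isLt]
    simp only [decide_eq_true_eq]
  have h2 : ∀ m : Fin D,
      Wnet r D C a t (Fin.natAdd r m) *
        (if y (Fin.natAdd r m) then 1 else 0)
      = a m * (if y (Fin.natAdd r m) then 1 else 0) := by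
    intro m
    simp only [Wnet, Fin.coe_natAdd]
    have hD : r + m.val - r < D := by have := m.isLt; omega
    rw [if_neg (by omega : ¬ r + m.val < r), dif_pos hD]
    have h4 : (⟨r + m.val - r, hD⟩ : Fin D) = m := Fin.ext (show r + m.val - r = m.val from by omega)
    rw [h4]
  rw [Finset.sum_congr rfl (fun m _ => h1 m), Finset.sum_congr rfl (fun m _ => h2 m)]
  have hsum : ∑ m : Fin r,
      (if m.val = 0 then (0:ℤ) else -(C (m.val * r + t) - C ((m.val - 1) * r + t))) *
        (if m.val ≤ k then 1 else 0) = C t - C (k * r + t) := by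
    rw [Fin.sum_univ_eq_sum_range (fun m =>
      (if m = 0 then (0:ℤ) else -(C (m * r + t) - C ((m - 1) * r + t))) *
        (if m ≤ k then 1 else 0)) r]
    rw [← Finset.sum_subset (Finset.range_subset_range.2 (by omega : k + 1 ≤ r))
      (fun m hm hnm => by
        simp only [Finset.mem_range] at hm hnm
        rw [if_neg (by omega : ¬ m ≤ k), mul_zero])]
    rw [Finset.sum_range_succ']
    have hcongr : ∀ m ∈ Finset.range k,
        (if m + 1 = 0 then (0:ℤ) else -(C ((m + 1) * r + t) - C ((m + 1 - 1) * r + t))) *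
          (if m + 1 ≤ k then 1 else 0)
        = C (m * r + t) - C ((m + 1) * r + t) := by
      intro m hm
      simp only [Finset.mem_range] at hm
      rw [if_neg (by omega : ¬ m + 1 = 0), if_pos (by omega : m + 1 ≤ k)]
      have h4 : m + 1 - 1 = m := by omega
      rw [h4]; ring
    rw [Finset.sum_congr rfl hcongr, Finset.sum_range_sub' (fun m => C (m * r + t)) k]
    simp
  rw [hsum]
  rfl

/-- a three-layer BTN (layer sizes `D`, `r+D`, `2r` with `r = ⌈√n⌉`)
mapping `x^i` to the concatenation `(h^k[r], h^ℓ[r])` where `i = k·r + ℓ`, `0 ≤ ℓ < r`. -/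
theorem stmt_8 (D n r : ℕ) (hr : r = ⌈Real.sqrt n⌉₊)
    (x : Fin n → Fin D → Bool) (hx : Function.Injective x)
    (a : Fin D → ℤ) (ha : StrictMono (fun i : Fin n => dotInt a (x i))) :
    ∃ (F : (Fin D → Bool) → (Fin (r + D) → Bool))
      (G : (Fin (r + D) → Bool) → (Fin (2 * r) → Bool)),
      IsThresholdLayer F ∧ IsThresholdLayer G ∧
      ∀ i : Fin n, G (F (x i)) = fun j : Fin (2 * r) =>
        if j.val < r then decide (j.val ≤ i.val / r)
        else decide (j.val - r ≤ i.val % r) := by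
  rcases Nat.eq_zero_or_pos n with hn | hn
  · refine ⟨fun _ _ => false, fun _ _ => false, ?_, ?_, ?_⟩
    · intro j; exact ⟨0, 1, fun v => by simp⟩
    · intro j; exact ⟨0, 1, fun v => by simp⟩
    · intro i; exact absurd i.isLt (by omega)
  have hr0 : 0 < r := by
    rw [hr]
    exact Nat.ceil_pos.2 (Real.sqrt_pos.2 (by exact_mod_cast hn))
  have hnr : n ≤ r * r := by
    have h1 : Real.sqrt n ≤ (r : ℝ) := hr ▸ Nat.le_ceil _
    have h2 : (n : ℝ) ≤ (r : ℝ) * r := by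
      nlinarith [Real.sq_sqrt (show (0:ℝ) ≤ n by positivity), Real.sqrt_nonneg (n:ℝ)]
    exact_mod_cast h2
  set C : ℕ → ℤ := fun i =>
    if h : i < n then dotInt a (x ⟨i, h⟩)
    else dotInt a (x ⟨n - 1, by omega⟩) + (i : ℤ) - n + 1 with hC
  have hCmono : StrictMono C := by
    apply strictMono_nat_of_lt_succ
    intro i
    by_cases h1 : i + 1 < n
    · have h0 : i < n := by omega
      simp only [hC, dif_pos h0, dif_pos h1]
      exact ha (show (⟨i, h0⟩ : Fin n) < ⟨i + 1, h1⟩ from by simp [Fin.mk_lt_mk])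
    · by_cases h0 : i < n
      · have hi : i = n - 1 := by omega
        simp only [hC, dif_pos h0, dif_neg h1]
        have he : x ⟨i, h0⟩ = x ⟨n - 1, by omega⟩ := congrArg x (Fin.ext hi)
        rw [he]
        push_cast
        have hone : ((i:ℤ) + 1) - (n:ℤ) + 1 = 1 := by omega
        linarith
      · simp only [hC, dif_neg h0, dif_neg h1]
        push_cast
        linarith
  have hCle : ∀ s t : ℕ, C s ≤ C t ↔ s ≤ t := fun s t => hCmono.le_iff_le
  have hCx : ∀ i : Fin n, dotInt a (x i) = C i.val := by
    intro i
    simp only [hC, dif_pos i.isLt]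
  refine ⟨Fnet r D C a, Gnet r D C a, Fnet_layer r D C a, Gnet_layer r D C a, ?_⟩
  intro i
  set k := i.val / r with hk
  set l := i.val % r with hl
  have hkl : i.val = k * r + l := (Nat.div_add_mod' i.val r).symm
  have hlr : l < r := Nat.mod_lt _ hr0
  have hkr : k < r := (Nat.div_lt_iff_lt_mul hr0).2 (lt_of_lt_of_le i.isLt hnr)
  have hstep : ∀ m : Fin r, Fnet r D C a (x i) (Fin.castAdd D m) = decide (m.val ≤ k) := by
    intro m
    rw [Fnet_lo r D C a (x i) (Fin.castAdd D m) (by simp)]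
    rw [hCx i]
    simp only [Fin.coe_castAdd]
    rw [decide_eq_decide, hCle]
    exact (Nat.le_div_iff_mul_le hr0).symm
  have hnat : (fun m : Fin D => Fnet r D C a (x i) (Fin.natAdd r m)) = x i := by
    funext m
    rw [Fnet_hi r D C a (x i) (Fin.natAdd r m) (by simp)
      (by simp only [Fin.coe_natAdd]; have := m.isLt; omega)]
    congr 1
    exact Fin.ext (by simp only [Fin.coe_natAdd]; omega)
  funext j
  by_cases hj : j.val < r
  · rw [if_pos hj]
    simp only [Gnet]
    rw [if_pos hj, dot_ev j.val (by omega : j.val < r + D), decide_one_le]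
    rw [Fnet_lo r D C a (x i) ⟨j.val, by omega⟩ hj, hCx i]
    rw [decide_eq_decide, hCle]
    exact (Nat.le_div_iff_mul_le hr0).symm
  · rw [if_neg hj]
    simp only [Gnet]
    rw [if_neg hj]
    rw [dotW r D C a (j.val - r) k hkr (Fnet r D C a (x i)) hstep]
    rw [hnat, hCx i]
    rw [decide_eq_decide]
    have hle := hCle (k * r + (j.val - r)) i.val
    have hjlt := j.isLt
    constructor
    · intro h
      have : C (k * r + (j.val - r)) ≤ C i.val := by linarith
      have := hle.1 this
      omega
    · intro h
      have : k * r + (j.val - r) ≤ i.val := by omega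
      have := hle.2 this
      linarith
end

section
/- Let z^0, …, z^{s−1} be s ≤ 2^d pairwise distinct binary vectors in {0,1}^d. Then there exists a threshold layer H from {0,1}^s to {0,1}^d such that H(h^i[s]) = z^i for every i = 0, …, s−1. -/
/-- a threshold layer mapping the step vector `h^i[s]` to `z^i`. -/
theorem stmt_9 (d s : ℕ) (hs : s ≤ 2 ^ d) (z : Fin s → Fin d → Bool)
    (hz : Function.Injective z) :
    ∃ H : (Fin s → Bool) → (Fin d → Bool),
      IsThresholdLayer H ∧ ∀ i : Fin s, H (stepVec s i.val) = z i := by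
  classical
  -- prefix-value function for a column of bits
  let c : (Fin s → Bool) → ℕ → ℤ := fun b m =>
    match m with
    | 0 => 0
    | m + 1 => if h : m < s then (if b ⟨m, h⟩ then 1 else 0) else 0
  -- weights: telescoping differences
  let a : Fin d → Fin s → ℤ := fun k j =>
    c (fun j => z j k) (j.val + 1) - c (fun j => z j k) j.val
  refine ⟨fun x k => decide ((1 : ℤ) ≤ ∑ j, a k j * (if x j then 1 else 0)), ?_, ?_⟩
  · intro k
    exact ⟨a k, 1, fun x => rfl⟩
  · intro i
    funext k
    have key : ∑ j : Fin s, a k j * (if stepVec s i.val j then 1 else 0)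
        = if z i k then 1 else 0 := by
      set b : Fin s → Bool := fun j => z j k with hb
      have hrw : ∑ j : Fin s, a k j * (if stepVec s i.val j then 1 else 0)
          = ∑ m ∈ Finset.range s,
              (c b (m + 1) - c b m) * (if m ≤ i.val then 1 else 0) := by
        rw [Finset.sum_range fun m => (c b (m + 1) - c b m) * (if m ≤ i.val then 1 else 0)]
        apply Finset.sum_congr rfl
        intro j _
        simp [a, stepVec, hb]
      rw [hrw]
      have hsub : Finset.range (i.val + 1) ⊆ Finset.range s :=
        Finset.range_subset_range.mpr i.isLt
      rw [← Finset.sum_subset hsub]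
      · have : ∑ m ∈ Finset.range (i.val + 1),
            (c b (m + 1) - c b m) * (if m ≤ i.val then 1 else 0)
            = ∑ m ∈ Finset.range (i.val + 1), (c b (m + 1) - c b m) := by
          apply Finset.sum_congr rfl
          intro m hm
          rw [if_pos (Nat.lt_succ_iff.mp (Finset.mem_range.mp hm)), mul_one]
        rw [this, Finset.sum_range_sub (c b)]
        simp [c, i.isLt, hb]
      · intro m _ hm
        rw [if_neg, mul_zero]
        exact fun h => hm (Finset.mem_range.mpr (Nat.lt_succ_of_le h))
    simp only []
    rw [key]
    cases z i k <;> simp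
end

section
/- Let X_n ⊆ {0,1}^D be a set of n pairwise distinct binary vectors. Then there exist an enumeration x^0, …, x^{n−1} of X_n, a threshold layer from {0,1}^D to {0,1}^n, and a threshold layer from {0,1}^n to {0,1}^{⌈log₂ n⌉}, such that their composition maps x^i to i2b_{⌈log₂ n⌉}(i), the ⌈log₂ n⌉-bit binary representation of i, for every i = 0, …, n−1. -/
/-!
Sort the points by their binary value `∑ₖ 2ᵏ xₖ`. The first layer has one neuron per point,
firing on `v` iff the binary value of `v` is at least that of `xʲ`; it sends `xⁱ` to the step
vector `stepVec n i`. A neuron reading a step vector sees `∑_{j ≤ i} aⱼ`, so choosing the weights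
as the successive differences of any integer sequence `c` makes it read off `c i`; with `c` the
`k`-th bit of the index, the second layer outputs `i2b d i`.
-/

theorem Finset.exists_strictMono_comp {α β : Type*} [LinearOrder β] (X : Finset α) {f : α → β}
    (hf : Set.InjOn f X) : ∃ x : Fin X.card → α, (∀ i, x i ∈ X) ∧ StrictMono (f ∘ x) := by
  classical
  have hcard : (X.image f).card = X.card := Finset.card_image_of_injOn hf
  let e := (X.image f).orderEmbOfFin hcard
  have he : ∀ i, ∃ a ∈ X, f a = e i := fun i =>
    Finset.mem_image.mp ((X.image f).orderEmbOfFin_mem hcard i)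
  choose x hxX hfx using he
  refine ⟨x, hxX, fun i j hij => ?_⟩
  simpa only [Function.comp_apply, hfx] using e.strictMono hij

namespace ThresholdEncoding

theorem isThresholdFun_decide_le {ι : Type*} [Fintype ι] (a : ι → ℤ) (θ : ℤ) :
    IsThresholdFun fun x => decide (θ ≤ dotInt a x) :=
  ⟨a, θ, fun _ => rfl⟩

section Encoder

variable {ι : Type*} [Fintype ι]

def binWeights (D : ℕ) : Fin D → ℤ := fun k => 2 ^ (k : ℕ)

theorem dotInt_binWeights {D : ℕ} (v : Fin D → Bool) :
    dotInt (binWeights D) v = (finFunctionFinEquiv (finTwoEquiv.symm ∘ v) : ℕ) := by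
  rw [finFunctionFinEquiv_apply, dotInt]
  push_cast
  refine Finset.sum_congr rfl fun k _ => ?_
  cases h : v k <;> simp [h, binWeights, finTwoEquiv, mul_comm]

theorem dotInt_binWeights_injective (D : ℕ) : Function.Injective (dotInt (binWeights D)) := by
  intro v w h
  simp only [dotInt_binWeights, Nat.cast_inj, Fin.val_inj] at h
  exact finTwoEquiv.symm.injective.comp_left (finFunctionFinEquiv.injective h)

def stepEncoder {n : ℕ} (w : ι → ℤ) (x : Fin n → ι → Bool) : (ι → Bool) → Fin n → Bool :=
  fun v j => decide (dotInt w (x j) ≤ dotInt w v)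

theorem isThresholdLayer_stepEncoder {n : ℕ} (w : ι → ℤ) (x : Fin n → ι → Bool) :
    IsThresholdLayer (stepEncoder w x) :=
  fun j => isThresholdFun_decide_le w (dotInt w (x j))

theorem stepEncoder_apply {n : ℕ} {w : ι → ℤ} {x : Fin n → ι → Bool}
    (hx : StrictMono (dotInt w ∘ x)) (i : Fin n) : stepEncoder w x (x i) = stepVec n i := by
  funext j
  simp only [stepEncoder, stepVec, decide_eq_decide]
  exact (hx.le_iff_le).trans Fin.le_def

end Encoder

section Decoder

def stepWeights (c : ℕ → ℤ) : ℕ → ℤ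
  | 0 => c 0
  | j + 1 => c (j + 1) - c j

theorem sum_range_stepWeights (c : ℕ → ℤ) (i : ℕ) :
    ∑ j ∈ Finset.range (i + 1), stepWeights c j = c i := by
  induction i with
  | zero => simp [stepWeights]
  | succ i ih => rw [Finset.sum_range_succ, ih, stepWeights]; ring

theorem dotInt_stepWeights_stepVec (c : ℕ → ℤ) {n i : ℕ} (hi : i < n) :
    dotInt (fun j : Fin n => stepWeights c j) (stepVec n i) = c i := by
  have hrange : (Finset.range n).filter (· ≤ i) = Finset.range (i + 1) := by
    ext j
    simp only [Finset.mem_filter, Finset.mem_range]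
    omega
  rw [← sum_range_stepWeights c i, ← hrange, Finset.sum_filter, dotInt,
    ← Fin.sum_univ_eq_sum_range (fun j => if j ≤ i then stepWeights c j else 0)]
  refine Finset.sum_congr rfl fun j _ => ?_
  by_cases hj : (j : ℕ) ≤ i <;> simp [stepVec, hj]

variable {κ : Type*}

def stepDecoder (n : ℕ) (b : ℕ → κ → Bool) : (Fin n → Bool) → κ → Bool :=
  fun y k => decide (1 ≤ dotInt (fun j : Fin n => stepWeights (fun m => (b m k).toNat) j) y)

theorem isThresholdLayer_stepDecoder (n : ℕ) (b : ℕ → κ → Bool) :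
    IsThresholdLayer (stepDecoder n b) :=
  fun _ => isThresholdFun_decide_le _ 1

theorem stepDecoder_stepVec {n i : ℕ} (b : ℕ → κ → Bool) (hi : i < n) :
    stepDecoder n b (stepVec n i) = b i := by
  funext k
  rw [stepDecoder, dotInt_stepWeights_stepVec _ hi]
  cases b i k <;> simp

end Decoder

end ThresholdEncoding

open ThresholdEncoding

/-- there are an enumeration of `X_n` and a three-layer BTN with `n`
hidden nodes mapping `x^i` to the `⌈log₂ n⌉`-bit binary representation of `i`. -/
theorem stmt_10 (D n : ℕ) (X : Finset (Fin D → Bool)) (hX : X.card = n) :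
    ∃ x : Fin n → Fin D → Bool, Function.Injective x ∧ (∀ i, x i ∈ X) ∧
      ∃ (F : (Fin D → Bool) → (Fin n → Bool))
        (G : (Fin n → Bool) → (Fin (Nat.clog 2 n) → Bool)),
        IsThresholdLayer F ∧ IsThresholdLayer G ∧
        ∀ i : Fin n, G (F (x i)) = i2b (Nat.clog 2 n) i.val := by
  subst hX
  obtain ⟨x, hxX, hmono⟩ := X.exists_strictMono_comp (dotInt_binWeights_injective D).injOn
  refine ⟨x, hmono.injective.of_comp, hxX, stepEncoder (binWeights D) x,
    stepDecoder X.card (i2b _), isThresholdLayer_stepEncoder _ _,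
    isThresholdLayer_stepDecoder _ _, fun i => ?_⟩
  rw [stepEncoder_apply hmono, stepDecoder_stepVec _ i.isLt]
end

section
/- Let d ≥ 2, n = 2^d, N = C(n,2), and define Y = {y^0, …, y^{n−1}} ⊆ {0,1}^N by indexing the N coordinates by the pairs (i,j) with 0 ≤ i < j ≤ n−1 and setting y^k_{(i,j)} = 1 if and only if k = i or k = j. Then there exists a threshold layer F from {0,1}^N to {0,1}^d that is injective on Y (indeed, one may take F(y^k) = i2b_d(k)). -/
theorem sum_incident_pairs {V : Type*} [Fintype V] [LinearOrder V] (g : V → ℤ) (k : V) :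
    ∑ p : {p : V × V // p.1 < p.2}, (if p.1.1 = k ∨ p.1.2 = k then g p.1.1 + g p.1.2 else 0) =
      ∑ v, g v + (Fintype.card V - 2) * g k := by
  have h_split : ∀ p : V × V,
      (if p.1 < p.2 then (if p.1 = k ∨ p.2 = k then g p.1 + g p.2 else 0) else 0) =
        (if p.1 = k ∧ p.1 < p.2 then g p.1 + g p.2 else 0) +
          (if p.2 = k ∧ p.1 < p.2 then g p.1 + g p.2 else 0) := by
    rintro ⟨i, j⟩
    by_cases hij : i < j
    · by_cases hi : i = k <;> by_cases hj : j = k <;> simp_all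
    · simp [hij]
  have h_left : ∑ p : V × V, (if p.1 = k ∧ p.1 < p.2 then g p.1 + g p.2 else 0) =
      ∑ j, if k < j then g k + g j else 0 := by
    rw [Fintype.sum_prod_type]
    simp only [ite_and]
    simp
  have h_right : ∑ p : V × V, (if p.2 = k ∧ p.1 < p.2 then g p.1 + g p.2 else 0) =
      ∑ i, if i < k then g i + g k else 0 := by
    rw [Fintype.sum_prod_type_right]
    simp only [ite_and]
    simp
  have h_ne : ∀ v, (if k < v then g k + g v else 0) + (if v < k then g v + g k else 0) =
      if v ≠ k then g v + g k else 0 := by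
    intro v
    rcases lt_trichotomy v k with h | rfl | h
    · simp [h, h.ne, h.not_gt]
    · simp
    · simp [h, h.ne', h.not_gt, add_comm]
  calc _ = ∑ p : V × V,
          if p.1 < p.2 then (if p.1 = k ∨ p.2 = k then g p.1 + g p.2 else 0) else 0 := by
        rw [← Finset.sum_filter (fun q : V × V => q.1 < q.2), eq_comm]
        apply Finset.sum_subtype
        simp
    _ = ∑ v, if v ≠ k then g v + g k else 0 := by
        simp only [h_split, Finset.sum_add_distrib, h_left, h_right, ← h_ne]
    _ = ∑ v, (g v + g k) - (g k + g k) := by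
        rw [← Finset.sum_filter, Finset.filter_ne', Finset.sum_erase_eq_sub (Finset.mem_univ k)]
    _ = ∑ v, g v + (Fintype.card V - 2) * g k := by
        simp only [Finset.sum_add_distrib, Finset.sum_const, Finset.card_univ, nsmul_eq_mul]
        ring

def pairIncidence {ι V : Type*} [LinearOrder V] (e : ι ≃ {p : V × V // p.1 < p.2}) (k : V) :
    ι → Bool :=
  fun c => decide ((e c).val.1 = k ∨ (e c).val.2 = k)

theorem exists_isThresholdFun_comp_pairIncidence {ι V : Type*} [Fintype ι] [Fintype V]
    [LinearOrder V] (hV : 3 ≤ Fintype.card V) (e : ι ≃ {p : V × V // p.1 < p.2})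
    (φ : V → Bool) :
    ∃ f : (ι → Bool) → Bool, IsThresholdFun f ∧ ∀ k, f (pairIncidence e k) = φ k := by
  let g : V → ℤ := fun v => if φ v then 1 else 0
  let a : ι → ℤ := fun c => g (e c).val.1 + g (e c).val.2
  refine ⟨fun x => decide (∑ v, g v + 1 ≤ dotInt a x), ⟨a, _, fun _ => rfl⟩,
    fun k => ?_⟩
  have h_dot : dotInt a (pairIncidence e k) = ∑ v, g v + (Fintype.card V - 2) * g k := by
    rw [← sum_incident_pairs g k, dotInt, ← e.sum_comp]
    simp [a, pairIncidence]
  have h_gap : (1 : ℤ) ≤ Fintype.card V - 2 := by omega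
  beta_reduce
  rw [h_dot]
  cases h : φ k
  · simp [g, h]
  · simpa [g, h] using h_gap

theorem i2b_injective (d : ℕ) : Function.Injective fun k : Fin (2 ^ d) => i2b d k := by
  intro k k' h
  refine Fin.ext (Nat.eq_of_testBit_eq fun i => ?_)
  by_cases hi : i < d
  · exact congrFun h ⟨i, hi⟩
  · have h_le : 2 ^ d ≤ 2 ^ i := Nat.pow_le_pow_right two_pos (by omega)
    rw [Nat.testBit_lt_two_pow (k.isLt.trans_le h_le),
      Nat.testBit_lt_two_pow (k'.isLt.trans_le h_le)]

/-- for the set `Y = {y^0, …, y^{n−1}}` of `n = 2^d` vectors of dimension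
`N = C(n,2)` with `y^k_{(i,j)} = 1` iff `k ∈ {i,j}`, there is a threshold layer from
`{0,1}^N` to `{0,1}^d` that is injective on `Y`. -/
theorem stmt_12 (d : ℕ) (hd : 2 ≤ d)
    (e : Fin ((2 ^ d).choose 2) ≃ {p : Fin (2 ^ d) × Fin (2 ^ d) // p.1 < p.2})
    (y : Fin (2 ^ d) → Fin ((2 ^ d).choose 2) → Bool)
    (hy : ∀ k c, y k c = decide ((e c).val.1 = k ∨ (e c).val.2 = k)) :
    ∃ F : (Fin ((2 ^ d).choose 2) → Bool) → (Fin d → Bool),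
      IsThresholdLayer F ∧ Function.Injective (fun k => F (y k)) := by
  obtain rfl : y = pairIncidence e := funext fun k => funext (hy k)
  have h_card : 3 ≤ Fintype.card (Fin (2 ^ d)) := by
    rw [Fintype.card_fin]
    calc 3 ≤ 2 ^ 2 := by norm_num
      _ ≤ 2 ^ d := Nat.pow_le_pow_right two_pos hd
  choose f hf_threshold hf_bit using fun b : Fin d =>
    exists_isThresholdFun_comp_pairIncidence h_card e fun k => k.val.testBit b
  refine ⟨fun x b => f b x, hf_threshold, fun k k' h => i2b_injective d ?_⟩
  funext b
  simpa [hf_bit, i2b] using congrFun h b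
end

section
/- Let d ≥ 2, n = 2^d, N = C(n,2), and define Y = {y^0, …, y^{n−1}} ⊆ {0,1}^N by indexing the N coordinates by the pairs (i,j) with 0 ≤ i < j ≤ n−1 and setting y^k_{(i,j)} = 1 if and only if k = i or k = j. Then there is no threshold layer G from {0,1}^d to {0,1}^N such that Y ⊆ G({0,1}^d); that is, no two-layer Boolean threshold network maps {0,1}^d onto a set containing Y. -/
namespace Stmt13Aux

/-- Parity of a bit vector, in `ZMod 2`. -/
def par {d : ℕ} (x : Fin d → Bool) : ZMod 2 := ∑ i, (if x i then 1 else 0)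

/-- If a threshold function is true on exactly two points, they differ in parity. -/
lemma key {d : ℕ} (f : (Fin d → Bool) → Bool) (hf : IsThresholdFun f)
    (u v : Fin d → Bool) (huv : u ≠ v)
    (hval : ∀ x, f x = true ↔ (x = u ∨ x = v)) :
    par u ≠ par v := by
  obtain ⟨a, θ, ha⟩ := hf
  obtain ⟨b, hb⟩ := Function.ne_iff.mp huv
  have hdot : ∀ (x : Fin d → Bool) (t : Bool),
      dotInt a (Function.update x b t) =
        dotInt a x + a b * ((if t then 1 else 0) - (if x b then 1 else 0)) := by
    intro x t
    have h1 : ∀ i : Fin d, a i * (if Function.update x b t i then 1 else 0)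
        = a i * (if x i then 1 else 0)
          + (if i = b then a b * ((if t then 1 else 0) - (if x b then 1 else 0)) else 0) := by
      intro i
      rcases eq_or_ne i b with h | h
      · subst h; rw [Function.update_self, if_pos rfl]; ring
      · rw [Function.update_of_ne h, if_neg h]; ring
    simp only [dotInt, h1, Finset.sum_add_distrib, Finset.sum_ite_eq', Finset.mem_univ,
      if_true]
  have hdu : θ ≤ dotInt a u := by
    have h1 := (ha u).symm.trans ((hval u).mpr (Or.inl rfl))
    exact of_decide_eq_true h1
  have hdv : θ ≤ dotInt a v := by
    have h1 := (ha v).symm.trans ((hval v).mpr (Or.inr rfl))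
    exact of_decide_eq_true h1
  have hne : ∀ w : Fin d → Bool, θ ≤ dotInt a w → w = u ∨ w = v := by
    intro w hw
    exact (hval w).mp (by rw [ha w]; exact decide_eq_true hw)
  have huniq : ∀ b', u b' ≠ v b' → b' = b := by
    intro b' hb'
    by_contra hbb
    have h1 := hdot u (v b)
    have h2 := hdot v (u b)
    have hsum : θ ≤ dotInt a (Function.update u b (v b)) ∨
        θ ≤ dotInt a (Function.update v b (u b)) := by
      by_contra h
      push_neg at h
      have : dotInt a (Function.update u b (v b)) + dotInt a (Function.update v b (u b))
          = dotInt a u + dotInt a v := by rw [h1, h2]; ring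
      linarith [h.1, h.2]
    rcases hsum with h | h
    · rcases hne _ h with h' | h'
      · have := congrFun h' b
        rw [Function.update_self] at this
        exact hb this.symm
      · have := congrFun h' b'
        rw [Function.update_of_ne hbb] at this
        exact hb' this
    · rcases hne _ h with h' | h'
      · have := congrFun h' b'
        rw [Function.update_of_ne hbb] at this
        exact hb' this.symm
      · have := congrFun h' b
        rw [Function.update_self] at this
        exact hb this
  have hpar : par u - par v = (if u b then (1 : ZMod 2) else 0) - (if v b then 1 else 0) := by
    unfold par
    rw [← Finset.sum_sub_distrib]
    rw [Finset.sum_eq_single b]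
    · intro i _ hib
      have : u i = v i := by
        by_contra h; exact hib (huniq i h)
      simp [this]
    · simp
  have hone : par u - par v = 1 := by
    rw [hpar]
    cases hub : u b <;> cases hvb : v b
    · rw [hub, hvb] at hb; exact absurd rfl hb
    · decide
    · decide
    · rw [hub, hvb] at hb; exact absurd rfl hb
  intro h
  rw [h, sub_self] at hone
  exact one_ne_zero hone.symm

end Stmt13Aux

/-- for the set `Y = {y^0, …, y^{n−1}}` of `n = 2^d` vectors of dimension
`N = C(n,2)` with `y^k_{(i,j)} = 1` iff `k ∈ {i,j}`, no threshold layer from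
`{0,1}^d` to `{0,1}^N` has a range containing `Y`. -/
theorem stmt_13 (d : ℕ) (hd : 2 ≤ d)
    (e : Fin ((2 ^ d).choose 2) ≃ {p : Fin (2 ^ d) × Fin (2 ^ d) // p.1 < p.2})
    (y : Fin (2 ^ d) → Fin ((2 ^ d).choose 2) → Bool)
    (hy : ∀ k c, y k c = decide ((e c).val.1 = k ∨ (e c).val.2 = k)) :
    ¬ ∃ G : (Fin d → Bool) → (Fin ((2 ^ d).choose 2) → Bool),
        IsThresholdLayer G ∧ ∀ k, ∃ z : Fin d → Bool, G z = y k := by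
  rintro ⟨G, hG, hrange⟩
  choose z hz using hrange
  have hn4 : 4 ≤ 2 ^ d := by
    calc (4 : ℕ) = 2 ^ 2 := rfl
    _ ≤ 2 ^ d := Nat.pow_le_pow_right (by norm_num) hd
  -- `y` is injective
  have hyinj : Function.Injective y := by
    intro k k' hkk'
    by_contra hne
    obtain ⟨m, hmk, hmk'⟩ : ∃ m : Fin (2 ^ d), m ≠ k ∧ m ≠ k' := by
      have hcard : (({k, k'} : Finset (Fin (2 ^ d)))ᶜ).Nonempty := by
        rw [← Finset.card_pos, Finset.card_compl]
        have h2 : ({k, k'} : Finset (Fin (2 ^ d))).card ≤ 2 :=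
          (Finset.card_insert_le _ _).trans (by simp)
        have : Fintype.card (Fin (2 ^ d)) = 2 ^ d := by simp
        omega
      obtain ⟨m, hm⟩ := hcard
      simp only [Finset.mem_compl, Finset.mem_insert, Finset.mem_singleton, not_or] at hm
      exact ⟨m, hm.1, hm.2⟩
    have hval : ∀ (i j : Fin (2 ^ d)) (hij : i < j),
        y k (e.symm ⟨(i, j), hij⟩) = y k' (e.symm ⟨(i, j), hij⟩) := by
      intro i j hij; rw [hkk']
    rcases lt_trichotomy k m with h | h | h
    · have := hval k m h
      rw [hy, hy, Equiv.apply_symm_apply] at this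
      simp only [decide_eq_decide] at this
      have := this.mp (Or.inl trivial)
      rcases this with h' | h'
      · exact hne h'
      · exact hmk' h'
    · exact hmk h.symm
    · have := hval m k h
      rw [hy, hy, Equiv.apply_symm_apply] at this
      simp only [decide_eq_decide] at this
      have := this.mp (Or.inr trivial)
      rcases this with h' | h'
      · exact hmk' h'
      · exact hne h'
  have hzinj : Function.Injective z := by
    intro k k' h
    apply hyinj
    rw [← hz, ← hz, h]
  have hzsurj : Function.Surjective z := by
    have hcard : Fintype.card (Fin (2 ^ d)) = Fintype.card (Fin d → Bool) := by simp
    exact ((Fintype.bijective_iff_injective_and_card z).mpr ⟨hzinj, hcard⟩).surjective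
  have hpair : ∀ (i j : Fin (2 ^ d)), i < j →
      Stmt13Aux.par (z i) ≠ Stmt13Aux.par (z j) := by
    intro i j hij
    apply Stmt13Aux.key (fun x => G x (e.symm ⟨(i, j), hij⟩)) (hG _)
    · intro h
      exact (ne_of_lt hij) (hzinj h)
    · intro x
      obtain ⟨k, rfl⟩ := hzsurj x
      rw [hz, hy, Equiv.apply_symm_apply]
      simp only [decide_eq_true_eq]
      constructor
      · rintro (rfl | rfl)
        · exact Or.inl rfl
        · exact Or.inr rfl
      · rintro (h | h)
        · exact Or.inl (hzinj h).symm
        · exact Or.inr (hzinj h).symm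
  have h01 : (⟨0, by omega⟩ : Fin (2 ^ d)) < ⟨1, by omega⟩ := by
    simp [Fin.lt_def]
  have h12 : (⟨1, by omega⟩ : Fin (2 ^ d)) < ⟨2, by omega⟩ := by
    simp [Fin.lt_def]
  have h02 : (⟨0, by omega⟩ : Fin (2 ^ d)) < ⟨2, by omega⟩ := by
    simp [Fin.lt_def]
  have p01 := hpair _ _ h01
  have p12 := hpair _ _ h12
  have p02 := hpair _ _ h02
  have hzmod : ∀ a x y : ZMod 2, x ≠ a → y ≠ a → x = y := by decide
  exact p02 (hzmod _ _ _ p01 (Ne.symm p12))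
end

section
/- For each d ≥ 2 there exists a set X_n of n = 2^d pairwise distinct binary vectors of dimension D = C(n,2) such that there is no three-layer Boolean threshold network perfect autoencoder for X_n whose middle layer has ⌈log₂ n⌉ = d nodes; that is, there is no pair of threshold layers f : {0,1}^D → {0,1}^d and g : {0,1}^d → {0,1}^D with g(f(x)) = x for all x ∈ X_n. -/
lemma dot_update_swap {d : ℕ} (a : Fin d → ℤ) (u v : Fin d → Bool) (k : Fin d) :
    dotInt a (Function.update u k (v k)) + dotInt a (Function.update v k (u k))
      = dotInt a u + dotInt a v := by
  unfold dotInt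
  rw [← Finset.sum_add_distrib, ← Finset.sum_add_distrib]
  refine Finset.sum_congr rfl fun i _ => ?_
  by_cases h : i = k
  · subst h; simp only [Function.update_self]; ring
  · simp only [Function.update_of_ne h]

/-- A threshold function positive on exactly two points forces them to be adjacent:
any two coordinates where they differ coincide. -/
lemma two_pos_adjacent {d : ℕ} {g : (Fin d → Bool) → Bool} (hg : IsThresholdFun g)
    {u v : Fin d → Bool} (hu : g u = true) (hv : g v = true)
    (hother : ∀ w, w ≠ u → w ≠ v → g w = false)
    {k k' : Fin d} (hk : u k ≠ v k) (hk' : u k' ≠ v k') : k = k' := by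
  by_contra hne
  obtain ⟨a, θ, ha⟩ := hg
  have hsum : ∀ w, g w = true ↔ θ ≤ dotInt a w := by
    intro w; rw [ha w]; simp [dotInt]
  have h1 : θ ≤ dotInt a u := (hsum u).mp hu
  have h2 : θ ≤ dotInt a v := (hsum v).mp hv
  set w1 := Function.update u k (v k) with hw1def
  set w2 := Function.update v k (u k) with hw2def
  have hne' : k' ≠ k := fun h => hne h.symm
  have hw1u : w1 ≠ u := by
    intro h
    have h0 := congrFun h k
    rw [hw1def, Function.update_self] at h0
    exact hk h0.symm
  have hw1v : w1 ≠ v := by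
    intro h
    have h0 := congrFun h k'
    rw [hw1def, Function.update_of_ne hne'] at h0
    exact hk' h0
  have hw2v : w2 ≠ v := by
    intro h
    have h0 := congrFun h k
    rw [hw2def, Function.update_self] at h0
    exact hk h0
  have hw2u : w2 ≠ u := by
    intro h
    have h0 := congrFun h k'
    rw [hw2def, Function.update_of_ne hne'] at h0
    exact hk' h0.symm
  have h3 : ¬ θ ≤ dotInt a w1 := by
    intro hle
    have := (hsum w1).mpr hle
    rw [hother w1 hw1u hw1v] at this
    exact Bool.false_ne_true this
  have h4 : ¬ θ ≤ dotInt a w2 := by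
    intro hle
    have := (hsum w2).mpr hle
    rw [hother w2 hw2u hw2v] at this
    exact Bool.false_ne_true this
  have hkey := dot_update_swap a u v k
  rw [← hw1def, ← hw2def] at hkey
  omega

lemma pow_gap (d : ℕ) (hd : 2 ≤ d) : d + 1 < 2 ^ d := by
  induction d with
  | zero => omega
  | succ n ih =>
    rcases Nat.lt_or_ge n 2 with h | h
    · interval_cases n
      · omega
      · norm_num
    · have := ih h
      rw [pow_succ]
      omega

lemma x_inj (d : ℕ) (hd : 2 ≤ d)
    (x : Fin (2 ^ d) → Fin ((2 ^ d).choose 2) → Bool)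
    (hx : ∀ i j, x i j = decide (j.val < 2 ^ d - 1 ∧ (i.val = 0 ∨ i.val = j.val + 1))) :
    Function.Injective x := by
  have hn : 4 ≤ 2 ^ d := by
    calc (4 : ℕ) = 2 ^ 2 := rfl
    _ ≤ 2 ^ d := Nat.pow_le_pow_right (by norm_num) hd
  have hD : 2 ^ d - 1 ≤ (2 ^ d).choose 2 := by
    rw [Nat.choose_two_right, Nat.le_div_iff_mul_le (by norm_num)]
    have h1 : (2 ^ d - 1) * 2 ≤ (2 ^ d - 1) * 2 ^ d := Nat.mul_le_mul_left _ (by omega)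
    rw [mul_comm (2 ^ d) (2 ^ d - 1)]
    exact h1
  intro i i' h
  have hi2 := i.isLt
  have hi'2 := i'.isLt
  by_cases hi : i.val = 0 <;> by_cases hi' : i'.val = 0
  · exact Fin.ext (by omega)
  · exfalso
    by_cases h1 : i'.val = 1
    · have hc := congrFun h (⟨1, by omega⟩ : Fin ((2 ^ d).choose 2))
      rw [hx, hx] at hc
      simp only [decide_eq_decide] at hc
      omega
    · have hc := congrFun h (⟨0, by omega⟩ : Fin ((2 ^ d).choose 2))
      rw [hx, hx] at hc
      simp only [decide_eq_decide] at hc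
      omega
  · exfalso
    by_cases h1 : i.val = 1
    · have hc := congrFun h (⟨1, by omega⟩ : Fin ((2 ^ d).choose 2))
      rw [hx, hx] at hc
      simp only [decide_eq_decide] at hc
      omega
    · have hc := congrFun h (⟨0, by omega⟩ : Fin ((2 ^ d).choose 2))
      rw [hx, hx] at hc
      simp only [decide_eq_decide] at hc
      omega
  · have hc := congrFun h (⟨i.val - 1, by omega⟩ : Fin ((2 ^ d).choose 2))
    rw [hx, hx] at hc
    simp only [decide_eq_decide] at hc
    exact Fin.ext (by omega)

lemma main_aux (d : ℕ) (hd : 2 ≤ d)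
    (x : Fin (2 ^ d) → Fin ((2 ^ d).choose 2) → Bool)
    (hx : ∀ i j, x i j = decide (j.val < 2 ^ d - 1 ∧ (i.val = 0 ∨ i.val = j.val + 1)))
    (f : (Fin ((2 ^ d).choose 2) → Bool) → (Fin d → Bool))
    (g : (Fin d → Bool) → (Fin ((2 ^ d).choose 2) → Bool))
    (hf : IsThresholdLayer f) (hg : IsThresholdLayer g)
    (hfg : ∀ i, g (f (x i)) = x i) : False := by
  have hn : 4 ≤ 2 ^ d := by
    calc (4 : ℕ) = 2 ^ 2 := rfl
    _ ≤ 2 ^ d := Nat.pow_le_pow_right (by norm_num) hd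
  have hD : 2 ^ d - 1 ≤ (2 ^ d).choose 2 := by
    rw [Nat.choose_two_right, Nat.le_div_iff_mul_le (by norm_num)]
    rw [mul_comm (2 ^ d) (2 ^ d - 1)]
    exact Nat.mul_le_mul_left _ (by omega)
  set c : Fin (2 ^ d) → (Fin d → Bool) := fun i => f (x i) with hc
  have hcinj : Function.Injective c := by
    intro i i' hcc
    apply x_inj d hd x hx
    rw [← hfg i, ← hfg i']
    show g (c i) = g (c i')
    rw [hcc]
  have hcsurj : Function.Surjective c :=
    ((Fintype.bijective_iff_injective_and_card c).mpr
      ⟨hcinj, by simp [Fintype.card_fun]⟩).2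
  set z0 : Fin (2 ^ d) := ⟨0, by omega⟩ with hz0
  have main : ∀ l : Fin (2 ^ d), l.val ≠ 0 →
      ∃ k : Fin d, c z0 k ≠ c l k ∧ ∀ k', c z0 k' ≠ c l k' → k' = k := by
    intro l hl
    have hllt := l.isLt
    have hlt : l.val - 1 < (2 ^ d).choose 2 := by omega
    set j : Fin ((2 ^ d).choose 2) := ⟨l.val - 1, hlt⟩ with hj
    have hjv : (j : ℕ) = l.val - 1 := rfl
    have hz0v : (z0 : ℕ) = 0 := rfl
    have hgj := hg j
    have hu : g (c z0) j = true := by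
      show g (f (x z0)) j = true
      rw [hfg z0, hx]
      exact decide_eq_true ⟨by omega, Or.inl rfl⟩
    have hv : g (c l) j = true := by
      show g (f (x l)) j = true
      rw [hfg l, hx]
      exact decide_eq_true ⟨by omega, Or.inr (by omega)⟩
    have hother : ∀ w, w ≠ c z0 → w ≠ c l → g w j = false := by
      intro w hw0 hwl
      obtain ⟨m, rfl⟩ := hcsurj w
      have hm0 : m.val ≠ 0 := by
        intro hmm
        exact hw0 (congrArg c (Fin.ext hmm))
      have hml : m.val ≠ l.val := by
        intro hmm
        exact hwl (congrArg c (Fin.ext hmm))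
      show g (f (x m)) j = false
      rw [hfg m, hx]
      refine decide_eq_false ?_
      rintro ⟨hb1, hb2 | hb2⟩
      · exact hm0 hb2
      · apply hml
        show m.val = l.val
        have : (j : ℕ) = l.val - 1 := rfl
        omega
    have hne : c z0 ≠ c l := by
      intro hcc
      apply hl
      have := hcinj hcc
      rw [← this]
    obtain ⟨k, hk⟩ := Function.ne_iff.mp hne
    exact ⟨k, hk, fun k' hk' => two_pos_adjacent hgj hu hv hother hk' hk⟩
  choose phi hphi1 hphi2 using main
  have hpsi : Function.Injective
      (fun l : {l : Fin (2 ^ d) // ¬ l.val = 0} => phi l.1 l.2) := by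
    intro l m h
    simp only at h
    have hl1 := hphi1 l.1 l.2
    have hm1 := hphi1 m.1 m.2
    have hcl : c l.1 = c m.1 := by
      funext k'
      by_cases h1 : c z0 k' = c l.1 k' <;> by_cases h2 : c z0 k' = c m.1 k'
      · rw [← h1, h2]
      · have hk := hphi2 m.1 m.2 k' h2
        rw [hk, ← h] at h1
        exact absurd h1 hl1
      · have hk := hphi2 l.1 l.2 k' h1
        rw [hk, h] at h2
        exact absurd h2 hm1
      · have key : ∀ a b c : Bool, a ≠ b → a ≠ c → b = c := by decide
        exact key _ _ _ h1 h2
    exact Subtype.ext (hcinj hcl)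
  have hcard := Fintype.card_le_of_injective _ hpsi
  have hcardS : Fintype.card {l : Fin (2 ^ d) // ¬ l.val = 0} = 2 ^ d - 1 := by
    rw [Fintype.card_subtype_compl]
    have : Fintype.card {l : Fin (2 ^ d) // l.val = 0} = 1 := by
      refine Fintype.card_eq_one_iff.mpr ⟨⟨z0, rfl⟩, ?_⟩
      rintro ⟨m, hm⟩
      exact Subtype.ext (Fin.ext hm)
    rw [this]
    simp
  rw [hcardS, Fintype.card_fin] at hcard
  have := pow_gap d hd
  omega

/-- for each `d ≥ 2` there is a set of `n = 2^d` distinct binary vectors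
of dimension `D = C(n,2)` admitting no three-layer BTN perfect autoencoder with middle
layer of size `⌈log₂ n⌉ = d`. -/
theorem stmt_14 (d : ℕ) (hd : 2 ≤ d) :
    ∃ x : Fin (2 ^ d) → Fin ((2 ^ d).choose 2) → Bool, Function.Injective x ∧
      ¬ ∃ (f : (Fin ((2 ^ d).choose 2) → Bool) → (Fin d → Bool))
          (g : (Fin d → Bool) → (Fin ((2 ^ d).choose 2) → Bool)),
          IsThresholdLayer f ∧ IsThresholdLayer g ∧ ∀ i, g (f (x i)) = x i := by
  refine ⟨fun i j => decide (j.val < 2 ^ d - 1 ∧ (i.val = 0 ∨ i.val = j.val + 1)),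
    x_inj d hd _ (fun _ _ => rfl), ?_⟩
  rintro ⟨f, g, hf, hg, hfg⟩
  exact main_aux d hd _ (fun _ _ => rfl) f g hf hg hfg
end

section
/- Let X_n ⊆ {0,1}^D be a set of n pairwise distinct binary vectors and let r = ⌈√n⌉. Then there exists a five-layer Boolean threshold network with layer sizes D, r + D, 2r, rD, D (i.e., a composition of four threshold layers {0,1}^D → {0,1}^{r+D} → {0,1}^{2r} → {0,1}^{rD} → {0,1}^D) whose composition maps x to x for every x ∈ X_n (a perfect autoencoder with middle layer of size 2r). -/
/-!
Sort the patterns by their binary value `v` and write the rank of a pattern as `q * r + s` with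
`q, s < r`, which is possible since `n ≤ r * r`. Comparing `v` with the values of ranks `j * r`
gives the step vector of `q`. Against a step vector of `q`, telescoping weights `backDiff g` sum
to `g q`; with `g u` the value of rank `u * r + t` this lets the second layer compare `v` with the
value of rank `q * r + t` and so produce the step vector of `s`, while the input is forgotten.
Telescoping once more, the third layer writes the pattern of rank `q * r + s` into row `q` of an
`r × D` block, and the last layer takes the OR over the rows.
-/

open Finset Function

section Dot

variable {ι κ : Type*} [Fintype ι] [Fintype κ]

lemma dotInt_sumElim (a : ι → ℤ) (b : κ → ℤ) (y : ι → Bool) (z : κ → Bool) :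
    dotInt (Sum.elim a b) (Sum.elim y z) = dotInt a y + dotInt b z :=
  Fintype.sum_sum_type _

lemma dotInt_zero (y : ι → Bool) : dotInt 0 y = 0 := by
  simp [dotInt]

lemma dotInt_single [DecidableEq ι] (k : ι) (y : ι → Bool) :
    dotInt (Pi.single k 1) y = if y k then 1 else 0 := by
  rw [dotInt, Fintype.sum_eq_single k fun j hj => by simp [hj]]
  simp

lemma decide_one_le_ite (b : Bool) : decide ((1 : ℤ) ≤ if b then 1 else 0) = b := by
  cases b <;> simp

end Dot

def backDiff (g : ℕ → ℤ) : ℕ → ℤ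
  | 0 => g 0
  | u + 1 => g (u + 1) - g u

lemma sum_range_succ_backDiff (g : ℕ → ℤ) (q : ℕ) :
    ∑ u ∈ range (q + 1), backDiff g u = g q := by
  induction q with
  | zero => simp [backDiff]
  | succ q ih => rw [sum_range_succ, ih, backDiff]; ring

lemma dotInt_backDiff_stepVec (g : ℕ → ℤ) {q r : ℕ} (hq : q < r) :
    dotInt (fun u : Fin r => backDiff g u) (stepVec r q) = g q := by
  rw [← sum_range_succ_backDiff g q, dotInt]
  simp only [stepVec, decide_eq_true_eq, mul_ite, mul_one, mul_zero]
  rw [Fin.sum_univ_eq_sum_range (fun u => if u ≤ q then backDiff g u else 0), ← sum_filter]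
  congr 1
  ext u
  simp only [mem_filter, mem_range]
  omega

section Layers

variable {ι κ : Type*} [Fintype ι]

def thresholdLayer (a : κ → ι → ℤ) (θ : κ → ℤ) : (ι → Bool) → κ → Bool :=
  fun y j => decide (θ j ≤ dotInt (a j) y)

lemma isThresholdLayer_thresholdLayer (a : κ → ι → ℤ) (θ : κ → ℤ) :
    IsThresholdLayer (thresholdLayer a θ) :=
  fun j => ⟨a j, θ j, fun _ => rfl⟩

lemma IsThresholdLayer.comp_equiv {ι' κ' : Type*} [Fintype ι'] {F : (ι → Bool) → κ → Bool}
    (hF : IsThresholdLayer F) (e : ι ≃ ι') (g : κ' → κ) :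
    IsThresholdLayer fun y : ι' → Bool => F (y ∘ e) ∘ g := by
  intro j
  obtain ⟨a, θ, ha⟩ := hF (g j)
  refine ⟨a ∘ e.symm, θ, fun y => ?_⟩
  simp only [comp_apply, ha, ← e.sum_comp, Equiv.symm_apply_apply]

end Layers

section Autoencoder

variable (r : ℕ) {ι : Type*}

def quotientStepLayer [Fintype ι] [DecidableEq ι] (ℓ : ι → ℤ) (w : ℕ → ℤ) :
    (ι → Bool) → Fin r ⊕ ι → Bool :=
  thresholdLayer (Sum.elim (fun _ => ℓ) fun k => Pi.single k 1) (Sum.elim (fun j => w (j * r)) 1)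

def remainderStepLayer [Fintype ι] (ℓ : ι → ℤ) (w : ℕ → ℤ) :
    (Fin r ⊕ ι → Bool) → Fin r ⊕ Fin r → Bool :=
  thresholdLayer
    (Sum.elim (fun j => Sum.elim (Pi.single j 1) 0)
      fun t => Sum.elim (fun u => backDiff (fun u' => -w (u' * r + t)) u) ℓ)
    (Sum.elim 1 0)

/-- Against `Sum.elim (stepVec r q) (stepVec r s)` the weights of output `(a, k)` sum to
`2 * [a = q] + [P (a * r + s) k]`, so the threshold `3` is reached only when both hold. -/
def lookupLayer (P : ℕ → ι → Bool) : (Fin r ⊕ Fin r → Bool) → Fin r × ι → Bool :=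
  thresholdLayer
    (fun p => Sum.elim (fun u => backDiff (fun u' => if u' = p.1 then 2 else 0) u)
      fun t => backDiff (fun t' => if P (p.1 * r + t') p.2 then 1 else 0) t)
    3

def orLayer [Fintype ι] [DecidableEq ι] : (Fin r × ι → Bool) → ι → Bool :=
  thresholdLayer (fun k p => if p.2 = k then 1 else 0) 1

variable {r} {ℓ : ι → ℤ} {w : ℕ → ℤ} {y : ι → Bool} {q s : ℕ}

lemma quotientStepLayer_apply [Fintype ι] [DecidableEq ι] (hs : s < r)
    (hrank : ∀ m, w m ≤ dotInt ℓ y ↔ m ≤ q * r + s) :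
    quotientStepLayer r ℓ w y = Sum.elim (stepVec r q) y := by
  funext j
  cases j with
  | inl j =>
    simp only [quotientStepLayer, thresholdLayer, Sum.elim_inl, hrank, stepVec, decide_eq_decide]
    constructor <;> intro h <;> nlinarith
  | inr k =>
    simp only [quotientStepLayer, thresholdLayer, Sum.elim_inr, Pi.one_apply, dotInt_single,
      decide_one_le_ite]

lemma remainderStepLayer_apply [Fintype ι] (hq : q < r)
    (hrank : ∀ m, w m ≤ dotInt ℓ y ↔ m ≤ q * r + s) :
    remainderStepLayer r ℓ w (Sum.elim (stepVec r q) y) = Sum.elim (stepVec r q) (stepVec r s) := by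
  funext j
  cases j with
  | inl j =>
    simp only [remainderStepLayer, thresholdLayer, Sum.elim_inl, dotInt_sumElim, dotInt_single,
      dotInt_zero, add_zero, Pi.one_apply, decide_one_le_ite]
  | inr t =>
    simp only [remainderStepLayer, thresholdLayer, Sum.elim_inr, dotInt_sumElim,
      dotInt_backDiff_stepVec _ hq, Pi.zero_apply, stepVec, decide_eq_decide]
    have := hrank (q * r + t)
    omega

lemma lookupLayer_apply {P : ℕ → ι → Bool} (hq : q < r) (hs : s < r) :
    lookupLayer r P (Sum.elim (stepVec r q) (stepVec r s)) =
      fun p => decide ((p.1 : ℕ) = q) && P (q * r + s) p.2 := by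
  funext p
  simp only [lookupLayer, thresholdLayer, dotInt_sumElim, dotInt_backDiff_stepVec _ hq,
    dotInt_backDiff_stepVec _ hs]
  by_cases hp : (p.1 : ℕ) = q
  · subst hp
    cases P (p.1 * r + s) p.2 <;> simp
  · cases P (p.1 * r + s) p.2 <;> simp [hp, Ne.symm hp]

lemma orLayer_apply [Fintype ι] [DecidableEq ι] (hq : q < r) :
    orLayer r (fun p => decide ((p.1 : ℕ) = q) && y p.2) = y := by
  funext k
  rw [orLayer, thresholdLayer, dotInt, Fintype.sum_prod_type, Fintype.sum_eq_single ⟨q, hq⟩,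
    Fintype.sum_eq_single k]
  · simpa using decide_one_le_ite (y k)
  · intro k' hk'
    simp [hk']
  · intro a ha
    simp [Fin.ext_iff.not.mp ha]

end Autoencoder

lemma exists_rank_thresholds {n : ℕ} {v : Fin n → ℤ} (hv : Injective v) :
    ∃ (ρ : Fin n ≃ Fin n) (w : ℕ → ℤ), ∀ i m, w m ≤ v i ↔ m ≤ ρ i := by
  set σ := Tuple.sort v
  have hσ : StrictMono (v ∘ σ) :=
    (Tuple.monotone_sort v).strictMono_of_injective (hv.comp σ.injective)
  obtain ⟨B, hB⟩ := Finite.exists_le v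
  refine ⟨σ.symm, fun m => if h : m < n then v (σ ⟨m, h⟩) else B + 1, fun i m => ?_⟩
  dsimp only
  split_ifs with h
  · calc v (σ ⟨m, h⟩) ≤ v i ↔ (v ∘ σ) ⟨m, h⟩ ≤ (v ∘ σ) (σ.symm i) := by simp
      _ ↔ m ≤ σ.symm i := hσ.le_iff_le
  · have := (σ.symm i).isLt
    have := hB i
    constructor <;> intro <;> omega

lemma dotInt_two_pow_injective (D : ℕ) :
    Injective (dotInt fun k : Fin D => (2 : ℤ) ^ (k : ℕ)) := by
  have hbin : ∀ y : Fin D → Bool, dotInt (fun k : Fin D => (2 : ℤ) ^ (k : ℕ)) y =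
      ((∑ k ∈ (univ.filter fun k => y k).map Fin.valEmbedding, 2 ^ k : ℕ) : ℤ) := by
    intro y
    simp [dotInt, sum_map, sum_filter]
  intro y y' h
  rw [hbin, hbin, Nat.cast_inj] at h
  have := map_injective _ (geomSum_injective le_rfl h)
  funext k
  simpa using congrArg (k ∈ ·) this

theorem exists_thresholdAutoencoder_of_le_mul_self {n D r : ℕ} (hn : n ≤ r * r)
    (x : Fin n → Fin D → Bool) (hx : Injective x) :
    ∃ (G₁ : (Fin D → Bool) → Fin r ⊕ Fin D → Bool)
      (G₂ : (Fin r ⊕ Fin D → Bool) → Fin r ⊕ Fin r → Bool)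
      (G₃ : (Fin r ⊕ Fin r → Bool) → Fin r × Fin D → Bool)
      (G₄ : (Fin r × Fin D → Bool) → Fin D → Bool),
      IsThresholdLayer G₁ ∧ IsThresholdLayer G₂ ∧ IsThresholdLayer G₃ ∧ IsThresholdLayer G₄ ∧
      ∀ i, G₄ (G₃ (G₂ (G₁ (x i)))) = x i := by
  let ℓ : Fin D → ℤ := fun k => 2 ^ (k : ℕ)
  obtain ⟨ρ, w, hw⟩ := exists_rank_thresholds (v := fun i => dotInt ℓ (x i))
    ((dotInt_two_pow_injective D).comp hx)
  let P : ℕ → Fin D → Bool := fun m => if h : m < n then x (ρ.symm ⟨m, h⟩) else fun _ => false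
  refine ⟨quotientStepLayer r ℓ w, remainderStepLayer r ℓ w, lookupLayer r P, orLayer r,
    isThresholdLayer_thresholdLayer _ _, isThresholdLayer_thresholdLayer _ _,
    isThresholdLayer_thresholdLayer _ _, isThresholdLayer_thresholdLayer _ _, fun i => ?_⟩
  have hρ : ρ i < r * r := (ρ i).isLt.trans_le hn
  have hr : 0 < r := Nat.pos_of_mul_pos_left (Nat.zero_lt_of_lt hρ)
  have hq : (ρ i : ℕ) / r < r := Nat.div_lt_of_lt_mul hρ
  have hs : (ρ i : ℕ) % r < r := Nat.mod_lt _ hr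
  have hrank : ∀ m, w m ≤ dotInt ℓ (x i) ↔ m ≤ (ρ i : ℕ) / r * r + (ρ i : ℕ) % r := by
    simpa only [Nat.div_add_mod'] using hw i
  have hP : P ((ρ i : ℕ) / r * r + (ρ i : ℕ) % r) = x i := by
    simp [P, Nat.div_add_mod']
  rw [quotientStepLayer_apply hs hrank, remainderStepLayer_apply hq hrank, lookupLayer_apply hq hs,
    hP, orLayer_apply hq]

lemma le_ceil_sqrt_mul_self (n : ℕ) : n ≤ ⌈Real.sqrt n⌉₊ * ⌈Real.sqrt n⌉₊ := by
  have h : (n : ℝ) ≤ ⌈Real.sqrt n⌉₊ * ⌈Real.sqrt n⌉₊ :=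
    calc (n : ℝ) = Real.sqrt n * Real.sqrt n := (Real.mul_self_sqrt n.cast_nonneg).symm
      _ ≤ _ := mul_self_le_mul_self (Real.sqrt_nonneg _) (Nat.le_ceil _)
  exact_mod_cast h

/-- a five-layer BTN perfect autoencoder with layer sizes
`D`, `r+D`, `2r`, `rD`, `D`, where `r = ⌈√n⌉`. -/
theorem stmt_16 (D n r : ℕ) (hr : r = ⌈Real.sqrt n⌉₊)
    (x : Fin n → Fin D → Bool) (hx : Function.Injective x) :
    ∃ (F₁ : (Fin D → Bool) → (Fin (r + D) → Bool))
      (F₂ : (Fin (r + D) → Bool) → (Fin (2 * r) → Bool))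
      (F₃ : (Fin (2 * r) → Bool) → (Fin (r * D) → Bool))
      (F₄ : (Fin (r * D) → Bool) → (Fin D → Bool)),
      IsThresholdLayer F₁ ∧ IsThresholdLayer F₂ ∧ IsThresholdLayer F₃ ∧
      IsThresholdLayer F₄ ∧ ∀ i, F₄ (F₃ (F₂ (F₁ (x i)))) = x i := by
  obtain ⟨G₁, G₂, G₃, G₄, h₁, h₂, h₃, h₄, hG⟩ :=
    exists_thresholdAutoencoder_of_le_mul_self (hr ▸ le_ceil_sqrt_mul_self n) x hx
  let e₁ : Fin r ⊕ Fin D ≃ Fin (r + D) := finSumFinEquiv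
  let e₂ : Fin r ⊕ Fin r ≃ Fin (2 * r) := finSumFinEquiv.trans (finCongr (two_mul r).symm)
  let e₃ : Fin r × Fin D ≃ Fin (r * D) := finProdFinEquiv
  refine ⟨fun y => G₁ y ∘ e₁.symm, fun y => G₂ (y ∘ e₁) ∘ e₂.symm, fun y => G₃ (y ∘ e₂) ∘ e₃.symm,
    fun y => G₄ (y ∘ e₃), h₁.comp_equiv (Equiv.refl _) _, h₂.comp_equiv e₁ _, h₃.comp_equiv e₂ _,
    h₄.comp_equiv e₃ id, fun i => ?_⟩
  simpa [comp_assoc] using hG i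
end

section
/- Let s be a positive integer. There exist threshold layers F : {0,1}^s → {0,1}^{⌈log₂ s⌉} and G : {0,1}^{⌈log₂ s⌉} → {0,1}^s such that G(F(h^i[s])) = h^i[s] for every i = 0, …, s−1; that is, there is a three-layer Boolean threshold network with middle layer of size ⌈log₂ s⌉ that autoencodes the set of step vectors {h^i[s] : 0 ≤ i < s}. -/
/-- auxiliary: partial-sum target function for bit `k` -/
def bitVal (k : ℕ) : ℕ → ℤ
  | 0 => 0
  | (n+1) => if Nat.testBit n k then 1 else 0

lemma nat_bits_sum (d i : ℕ) :
    ∑ k ∈ Finset.range d, (if i.testBit k then 2 ^ k else 0) = i % 2 ^ d := by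
  induction d with
  | zero => simp [Nat.mod_one]
  | succ d ih =>
    rw [Finset.sum_range_succ, ih, Nat.pow_succ, Nat.mod_mul]
    have : i.testBit d = decide (i / 2 ^ d % 2 = 1) := Nat.testBit_eq_decide_div_mod_eq
    rcases Nat.mod_two_eq_zero_or_one (i / 2 ^ d) with h | h <;>
      simp [this, h, Nat.mul_comm]

lemma telescope_sum (s i : ℕ) (hi : i < s) (a : ℕ → ℤ) :
    ∑ j : Fin s, a j.val * (if (j.val ≤ i) then (1:ℤ) else 0)
      = ∑ j ∈ Finset.range (i+1), a j := by
  rw [Fin.sum_univ_eq_sum_range (fun j => a j * (if j ≤ i then (1:ℤ) else 0))]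
  rw [← Finset.sum_subset (Finset.range_subset_range.2 hi) (f := fun j => a j * (if j ≤ i then (1:ℤ) else 0))]
  · apply Finset.sum_congr rfl
    intro j hj
    simp [Nat.lt_succ_iff.mp (Finset.mem_range.mp hj)]
  · intro j _ hj
    simp [Nat.lt_succ_iff, Finset.mem_range] at hj
    have : ¬ (j ≤ i) := by omega
    simp [this]

/-- a three-layer BTN with middle layer of size `⌈log₂ s⌉`
autoencoding the step vectors `h^i[s]`, `0 ≤ i < s`. -/
theorem stmt_17 (s : ℕ) (hs : 0 < s) :
    ∃ (F : (Fin s → Bool) → (Fin (Nat.clog 2 s) → Bool))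
      (G : (Fin (Nat.clog 2 s) → Bool) → (Fin s → Bool)),
      IsThresholdLayer F ∧ IsThresholdLayer G ∧
      ∀ i : Fin s, G (F (stepVec s i.val)) = stepVec s i.val := by
  set d := Nat.clog 2 s with hd
  -- encoder weights
  set a : Fin d → Fin s → ℤ := fun k j => bitVal k (j.val + 1) - bitVal k j.val with ha
  refine ⟨fun x k => decide (1 ≤ dotInt (a k) x),
    fun b j => decide ((j.val : ℤ) ≤ ∑ k : Fin d, 2 ^ (k.val) * (if b k then 1 else 0)),
    ?_, ?_, ?_⟩
  · intro k
    exact ⟨a k, 1, fun x => rfl⟩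
  · intro j
    exact ⟨fun k => 2 ^ (k.val), (j.val : ℤ), fun x => rfl⟩
  · intro i
    have hF : ∀ k : Fin d, decide (1 ≤ dotInt (a k) (stepVec s i.val))
        = Nat.testBit i.val k.val := by
      intro k
      have : dotInt (a k) (stepVec s i.val)
          = bitVal k (i.val + 1) := by
        unfold dotInt
        have := telescope_sum s i.val i.isLt (fun j => bitVal k (j+1) - bitVal k j)
        simp only [stepVec, decide_eq_true_eq] at this ⊢
        rw [ha]
        simp only []
        rw [this, Finset.sum_range_sub (fun j => bitVal k j)]
        simp [bitVal]
      rw [this]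
      unfold bitVal
      rcases h : Nat.testBit i.val k.val with _ | _ <;> simp [h]
    have hsum : (∑ k : Fin d, (2:ℤ) ^ (k.val)
        * (if Nat.testBit i.val k.val then 1 else 0)) = (i.val : ℤ) := by
      have hmod : i.val % 2 ^ d = i.val := by
        apply Nat.mod_eq_of_lt
        exact lt_of_lt_of_le i.isLt (Nat.le_pow_clog (by norm_num) s)
      have := nat_bits_sum d i.val
      rw [hmod] at this
      calc (∑ k : Fin d, (2:ℤ) ^ (k.val) * (if Nat.testBit i.val k.val then 1 else 0))
          = ((∑ k ∈ Finset.range d, (if i.val.testBit k then 2 ^ k else 0) : ℕ) : ℤ) := by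
            rw [← Fin.sum_univ_eq_sum_range (fun k => (if i.val.testBit k then 2 ^ k else 0))]
            push_cast
            apply Finset.sum_congr rfl
            intro k _
            rcases h : Nat.testBit i.val k.val with _ | _ <;> simp [h]
        _ = (i.val : ℤ) := by rw [this]
    funext j
    simp only [hF, hsum, stepVec]
    rw [show (decide ((j.val:ℤ) ≤ (i.val:ℤ))) = decide (j.val ≤ i.val) by simp]
end

section
/- Let X_n ⊆ {0,1}^D be a set of n pairwise distinct binary vectors. Then there exists a five-layer Boolean threshold network with layer sizes D, n, ⌈log₂ n⌉, n, D (i.e., a composition of four threshold layers {0,1}^D → {0,1}^n → {0,1}^{⌈log₂ n⌉} → {0,1}^n → {0,1}^D) whose composition maps x to x for every x ∈ X_n; that is, a perfect Boolean threshold network autoencoder for X_n whose middle layer has only ⌈log₂ n⌉ nodes. -/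
lemma isThreshold_eq {ι : Type*} [Fintype ι] (z : ι → Bool) :
    IsThresholdFun (fun y : ι → Bool => decide (y = z)) := by
  classical
  refine ⟨fun i => if z i then 1 else -1, ∑ i, (if z i then (1:ℤ) else 0), fun y => ?_⟩
  rw [decide_eq_decide]
  rw [← sub_nonpos, ← Finset.sum_sub_distrib]
  have hterm : ∀ i, (if z i then (1:ℤ) else 0) -
      (if z i then (1:ℤ) else -1) * (if y i then 1 else 0)
      = if y i = z i then 0 else 1 := by
    intro i; cases hz : z i <;> cases hy : y i <;> simp
  simp_rw [hterm]
  have hnn : ∀ i ∈ Finset.univ, (0:ℤ) ≤ if y i = z i then 0 else 1 := by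
    intro i _; split <;> norm_num
  constructor
  · intro h; subst h; simp
  · intro h
    have h0 : ∑ i, (if y i = z i then (0:ℤ) else 1) = 0 :=
      le_antisymm h (Finset.sum_nonneg hnn)
    rw [Finset.sum_eq_zero_iff_of_nonneg hnn] at h0
    funext i
    have := h0 i (Finset.mem_univ i)
    by_contra hne
    simp [hne] at this

lemma sum_mul_indicator {n : ℕ} (w : Fin n → ℤ) (y : Fin n → Bool) (i : Fin n)
    (hy : ∀ j, y j = true ↔ j = i) :
    ∑ j, w j * (if y j then 1 else 0) = w i := by
  rw [Finset.sum_eq_single i]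
  · simp [(hy i).mpr rfl]
  · intro j _ hj
    have hf : y j = false := by
      rw [← Bool.not_eq_true, hy]; exact hj
    simp [hf]
  · simp

/-- a five-layer BTN perfect autoencoder with layer sizes
`D`, `n`, `⌈log₂ n⌉`, `n`, `D`. -/
theorem stmt_18 (D n : ℕ) (x : Fin n → Fin D → Bool) (hx : Function.Injective x) :
    ∃ (F₁ : (Fin D → Bool) → (Fin n → Bool))
      (F₂ : (Fin n → Bool) → (Fin (Nat.clog 2 n) → Bool))
      (F₃ : (Fin (Nat.clog 2 n) → Bool) → (Fin n → Bool))
      (F₄ : (Fin n → Bool) → (Fin D → Bool)),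
      IsThresholdLayer F₁ ∧ IsThresholdLayer F₂ ∧ IsThresholdLayer F₃ ∧
      IsThresholdLayer F₄ ∧ ∀ i, F₄ (F₃ (F₂ (F₁ (x i)))) = x i := by
  classical
  set d := Nat.clog 2 n with hd
  refine ⟨fun y j => decide (y = x j),
      fun y k => decide ((1:ℤ) ≤ ∑ j, (if Nat.testBit j.val k.val then 1 else 0) *
        (if y j then 1 else 0)),
      fun y j => decide (y = i2b d j.val),
      fun y k => decide ((1:ℤ) ≤ ∑ j, (if x j k then 1 else 0) * (if y j then 1 else 0)),
      fun j => isThreshold_eq _,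
      fun k => ⟨_, 1, fun y => rfl⟩,
      fun j => isThreshold_eq _,
      fun k => ⟨_, 1, fun y => rfl⟩, ?_⟩
  intro i
  have hn : n ≤ 2 ^ d := Nat.le_pow_clog (by norm_num) n
  -- layer 1 output is one-hot at i
  have h1 : ∀ j, decide (x i = x j) = true ↔ j = i := by
    intro j; simp [hx.eq_iff, eq_comm]
  -- layer 2 output is the binary representation of i
  have h2 : (fun k : Fin d => decide ((1:ℤ) ≤ ∑ j, (if Nat.testBit j.val k.val then 1 else 0) *
      (if decide (x i = x j) then 1 else 0))) = i2b d i.val := by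
    funext k
    rw [sum_mul_indicator _ _ i h1]
    unfold i2b
    cases hb : Nat.testBit i.val k.val <;> simp [hb]
  -- i2b is injective below 2^d
  have h3 : ∀ j : Fin n, decide (i2b d i.val = i2b d j.val) = true ↔ j = i := by
    intro j
    simp only [decide_eq_true_eq]
    constructor
    · intro h
      have : i.val = j.val := by
        apply Nat.eq_of_testBit_eq
        intro k
        by_cases hk : k < d
        · exact congrFun h ⟨k, hk⟩
        · rw [Nat.testBit_lt_two_pow, Nat.testBit_lt_two_pow]
          · exact lt_of_lt_of_le (lt_of_lt_of_le j.isLt hn)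
              (Nat.pow_le_pow_right (by norm_num) (le_of_not_gt hk))
          · exact lt_of_lt_of_le (lt_of_lt_of_le i.isLt hn)
              (Nat.pow_le_pow_right (by norm_num) (le_of_not_gt hk))
      exact (Fin.ext this).symm
    · intro h; subst h; rfl
  funext k
  simp only [h2]
  rw [sum_mul_indicator _ _ i h3]
  cases hb : x i k <;> simp [hb]
end
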